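/- arXiv:2002.07690 — 5 statements merged into one kernel-verified Lean document; each statement's English description precedes it below -/
import Mathlib

section
/- Let X be a nonempty set. Then the free inverse monoid FIM(X) is not finitely presented as a monoid: there is no finite alphabet A and no finite set R of pairs of words over A such that the presented monoid A*/⟨R⟩ is isomorphic (as a monoid) to FIM(X). -/
/-- The formal inverse of a word over `X ∪ X⁻¹` (modelled as `X ⊕ X`):
reverse the word and exchange each letter with its formal inverse. -/
def winvX {X : Type} (w : FreeMonoid (X ⊕ X)) : FreeMonoid (X ⊕ X) :=
  FreeMonoid.ofList ((FreeMonoid.toList w).reverse.map Sum.swap)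

/-- The defining relations of the free inverse monoid. -/
inductive FIMRel (X : Type) : FreeMonoid (X ⊕ X) → FreeMonoid (X ⊕ X) → Prop
  | idem (w : FreeMonoid (X ⊕ X)) : FIMRel X (w * winvX w * w) w
  | comm (w z : FreeMonoid (X ⊕ X)) :
      FIMRel X (w * winvX w * (z * winvX z)) (z * winvX z * (w * winvX w))

/-- The free inverse monoid on `X`. -/
abbrev FIM (X : Type) := (conGen (FIMRel X)).Quotient

/-- A monoid is finitely presented if it is isomorphic to the quotient of a
free monoid on a finite alphabet by the congruence generated by a finite
set of pairs of words. -/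
def IsFinitelyPresentedMonoid (N : Type) [Monoid N] : Prop :=
  ∃ (A : Type) (_ : Finite A) (Rel : Set (FreeMonoid A × FreeMonoid A)),
    Rel.Finite ∧
    Nonempty ((conGen fun u v => (u, v) ∈ Rel).Quotient ≃* N)

namespace FIMAux

variable {X : Type}

def d : X ⊕ X → ℤ := Sum.elim (fun _ => 1) (fun _ => -1)

lemma d_swap (c : X ⊕ X) : d (Sum.swap c) = - d c := by cases c <;> simp [d]

lemma d_le_one (c : X ⊕ X) : d c ≤ 1 := by cases c <;> simp [d]

lemma neg_one_le_d (c : X ⊕ X) : -1 ≤ d c := by cases c <;> simp [d]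

def hsum (l : List (X ⊕ X)) : ℤ := (l.map d).sum

@[simp] lemma hsum_nil : hsum ([] : List (X ⊕ X)) = 0 := rfl

@[simp] lemma hsum_cons (c : X ⊕ X) (t : List (X ⊕ X)) : hsum (c :: t) = d c + hsum t := by
  simp [hsum]

@[simp] lemma hsum_append (l₁ l₂ : List (X ⊕ X)) : hsum (l₁ ++ l₂) = hsum l₁ + hsum l₂ := by
  simp [hsum]

def winvL (l : List (X ⊕ X)) : List (X ⊕ X) := l.reverse.map Sum.swap

lemma toList_winvX (w : FreeMonoid (X ⊕ X)) :
    FreeMonoid.toList (winvX w) = winvL (FreeMonoid.toList w) := by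
  simp [winvX, winvL]

@[simp] lemma winvL_nil : winvL ([] : List (X ⊕ X)) = [] := rfl

lemma winvL_cons (c : X ⊕ X) (t : List (X ⊕ X)) :
    winvL (c :: t) = winvL t ++ [Sum.swap c] := by
  simp [winvL]

@[simp] lemma hsum_winvL (l : List (X ⊕ X)) : hsum (winvL l) = - hsum l := by
  induction l with
  | nil => simp
  | cons c t ih => rw [winvL_cons, hsum_append, ih, hsum_cons]; simp [d_swap]; try ring

def cr (L h h' : ℤ) : List Bool :=
  if min h h' = L then [true] else if min h h' = -L - 1 then [false] else []

lemma cr_comm (L h h' : ℤ) : cr L h h' = cr L h' h := by simp [cr, min_comm]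

lemma cr_reverse (L h h' : ℤ) : (cr L h h').reverse = cr L h h' := by
  unfold cr; split_ifs <;> simp

def chi (L : ℤ) : ℤ → List (X ⊕ X) → List Bool
  | _, [] => []
  | h, c :: t => cr L h (h + d c) ++ chi L (h + d c) t

@[simp] lemma chi_nil (L h : ℤ) : chi L h ([] : List (X ⊕ X)) = [] := rfl

lemma chi_cons (L h : ℤ) (c : X ⊕ X) (t : List (X ⊕ X)) :
    chi L h (c :: t) = cr L h (h + d c) ++ chi L (h + d c) t := rfl

lemma chi_append (L : ℤ) (l₁ l₂ : List (X ⊕ X)) : ∀ h,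
    chi L h (l₁ ++ l₂) = chi L h l₁ ++ chi L (h + hsum l₁) l₂ := by
  induction l₁ with
  | nil => intro h; simp
  | cons c t ih =>
      intro h
      rw [List.cons_append, chi_cons, ih, chi_cons, hsum_cons, List.append_assoc]
      ring_nf

lemma chi_height_eq (L h h' : ℤ) (l : List (X ⊕ X)) (e : h = h') : chi L h l = chi L h' l := by
  rw [e]

lemma chi_winvL (L : ℤ) (l : List (X ⊕ X)) : ∀ h,
    chi L (h + hsum l) (winvL l) = (chi L h l).reverse := by
  induction l with
  | nil => intro h; simp
  | cons c t ih =>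
      intro h
      rw [winvL_cons, chi_append, chi_cons (t := []), chi_nil, List.append_nil,
        chi_cons, List.reverse_append, cr_reverse]
      have h1 : h + hsum (c :: t) = (h + d c) + hsum t := by rw [hsum_cons]; ring
      rw [chi_height_eq _ _ _ _ h1, ih (h + d c)]
      congr 1
      have h2 : h + hsum (c :: t) + hsum (winvL t) = h + d c := by
        rw [hsum_winvL, hsum_cons]; ring
      rw [h2, d_swap]
      have h3 : h + d c + -d c = h := by ring
      rw [h3, cr_comm]

lemma true_mem_chi (L : ℤ) (l : List (X ⊕ X)) : ∀ h, true ∈ chi L h l →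
    L + 1 ≤ h + l.length := by
  induction l with
  | nil => intro h hm; simp at hm
  | cons c t ih =>
      intro h hm
      rw [chi_cons, List.mem_append] at hm
      simp only [List.length_cons]
      push_cast
      rcases hm with hm | hm
      · unfold cr at hm
        split_ifs at hm with h1 h2 <;> simp at hm
        have h3 : L ≤ h := h1 ▸ min_le_left h (h + d c)
        have h4 : (0:ℤ) ≤ (t.length : ℤ) := by positivity
        linarith
      · have h5 := ih (h + d c) hm
        have hd := d_le_one c
        linarith

lemma false_mem_chi (L : ℤ) (l : List (X ⊕ X)) : ∀ h, false ∈ chi L h l →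
    h - l.length ≤ -L - 1 := by
  induction l with
  | nil => intro h hm; simp at hm
  | cons c t ih =>
      intro h hm
      rw [chi_cons, List.mem_append] at hm
      simp only [List.length_cons]
      push_cast
      have hd := neg_one_le_d c
      have hd' := d_le_one c
      have h4 : (0:ℤ) ≤ (t.length : ℤ) := by positivity
      rcases hm with hm | hm
      · unfold cr at hm
        split_ifs at hm with h1 h2 <;> simp at hm
        have h3 : h - 1 ≤ min h (h + d c) := le_min (by linarith) (by linarith)
        rw [h2] at h3
        linarith
      · have h5 := ih (h + d c) hm
        linarith



/-- Bounded version of the FIM relations: idempotent relations for all words,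
commutation relations only for words of length at most `N`. -/
def RelN (X : Type) (N : ℕ) : FreeMonoid (X ⊕ X) → FreeMonoid (X ⊕ X) → Prop :=
  fun u v => (∃ w, u = w * winvX w * w ∧ v = w) ∨
    (∃ w z, (FreeMonoid.toList w).length ≤ N ∧ (FreeMonoid.toList z).length ≤ N ∧
      u = w * winvX w * (z * winvX z) ∧ v = z * winvX z * (w * winvX w))

lemma fimRel_relN {X : Type} (u v : FreeMonoid (X ⊕ X)) (h : FIMRel X u v) :
    ∃ N, RelN X N u v := by
  induction h with
  | idem w => exact ⟨0, Or.inl ⟨w, rfl, rfl⟩⟩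
  | comm w z =>
      exact ⟨max (FreeMonoid.toList w).length (FreeMonoid.toList z).length,
        Or.inr ⟨w, z, le_max_left _ _, le_max_right _ _, rfl, rfl⟩⟩

lemma relN_mono {X : Type} {N N' : ℕ} (h : N ≤ N') (u v : FreeMonoid (X ⊕ X))
    (huv : RelN X N u v) : RelN X N' u v := by
  rcases huv with h1 | ⟨w, z, hw, hz, h2, h3⟩
  · exact Or.inl h1
  · exact Or.inr ⟨w, z, hw.trans h, hz.trans h, h2, h3⟩

/-- The "first big crossing" congruence at scale `N`. -/
def PN (X : Type) (N : ℕ) : Con (FreeMonoid (X ⊕ X)) where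
  r u v := ∀ l r' : List (X ⊕ X),
    (chi ((N : ℤ) + 1) 0 (l ++ FreeMonoid.toList u ++ r')).head? =
    (chi ((N : ℤ) + 1) 0 (l ++ FreeMonoid.toList v ++ r')).head?
  iseqv := ⟨fun _ _ _ => rfl, fun h l r' => (h l r').symm,
    fun h1 h2 l r' => (h1 l r').trans (h2 l r')⟩
  mul' := by
    intro w x y z h1 h2 l r'
    have a1 := h1 l (FreeMonoid.toList y ++ r')
    have a2 := h2 (l ++ FreeMonoid.toList x) r'
    simp only [FreeMonoid.toList_mul, List.append_assoc] at a1 a2 ⊢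
    rw [a1, a2]

lemma headlem_idem (A C D : List Bool) :
    (A ++ (C ++ (C.reverse ++ (C ++ D)))).head? = (A ++ (C ++ D)).head? := by
  cases A <;> cases C <;> simp

lemma headlem_comm (A Cw Cz D : List Bool)
    (hh : ∀ x y, Cw.head? = some x → Cz.head? = some y → x = y) :
    (A ++ (Cw ++ (Cw.reverse ++ (Cz ++ (Cz.reverse ++ D))))).head? =
    (A ++ (Cz ++ (Cz.reverse ++ (Cw ++ (Cw.reverse ++ D))))).head? := by
  cases A with
  | cons a t => simp
  | nil =>
    cases Cw with
    | nil => simp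
    | cons cw tw =>
      cases Cz with
      | nil => simp
      | cons cz tz => simp [hh cw cz rfl rfl]

lemma heads_match {X : Type} (N : ℕ) (a : ℤ) (tw tz : List (X ⊕ X))
    (hw : tw.length ≤ N) (hz : tz.length ≤ N) :
    ∀ x y, (chi ((N : ℤ) + 1) a tw).head? = some x →
      (chi ((N : ℤ) + 1) a tz).head? = some y → x = y := by
  set L : ℤ := (N : ℤ) + 1 with hL
  intro x y hx hy
  have hxm : x ∈ chi L a tw := by
    cases h : chi L a tw with
    | nil => rw [h] at hx; simp at hx
    | cons c t => rw [h] at hx; simp at hx; subst hx; exact List.mem_cons_self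
  have hym : y ∈ chi L a tz := by
    cases h : chi L a tz with
    | nil => rw [h] at hy; simp at hy
    | cons c t => rw [h] at hy; simp at hy; subst hy; exact List.mem_cons_self
  have hwN : (tw.length : ℤ) ≤ N := by exact_mod_cast hw
  have hzN : (tz.length : ℤ) ≤ N := by exact_mod_cast hz
  cases x <;> cases y
  · rfl
  · -- x = false, y = true
    have h1 := false_mem_chi L tw a hxm
    have h2 := true_mem_chi L tz a hym
    exfalso; omega
  · -- x = true, y = false
    have h1 := true_mem_chi L tw a hxm
    have h2 := false_mem_chi L tz a hym
    exfalso; omega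
  · rfl

lemma PN_idem {X : Type} (N : ℕ) (w : FreeMonoid (X ⊕ X)) :
    (PN X N) (w * winvX w * w) w := by
  intro l r'
  simp only [FreeMonoid.toList_mul, toList_winvX, List.append_assoc]
  simp only [chi_append]
  simp only [chi_winvL]
  simp only [hsum_winvL, zero_add]
  have e1 : hsum l + hsum (FreeMonoid.toList w) + -hsum (FreeMonoid.toList w) = hsum l := by
    ring
  simp only [e1]
  exact headlem_idem _ _ _

lemma PN_comm {X : Type} (N : ℕ) (w z : FreeMonoid (X ⊕ X))
    (hw : (FreeMonoid.toList w).length ≤ N) (hz : (FreeMonoid.toList z).length ≤ N) :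
    (PN X N) (w * winvX w * (z * winvX z)) (z * winvX z * (w * winvX w)) := by
  intro l r'
  simp only [FreeMonoid.toList_mul, toList_winvX, List.append_assoc]
  simp only [chi_append]
  simp only [chi_winvL]
  simp only [hsum_winvL, zero_add]
  have e1 : hsum l + hsum (FreeMonoid.toList w) + -hsum (FreeMonoid.toList w) = hsum l := by
    ring
  have e2 : hsum l + hsum (FreeMonoid.toList z) + -hsum (FreeMonoid.toList z) = hsum l := by
    ring
  simp only [e1, e2]
  exact headlem_comm _ _ _ _
    (heads_match N _ (FreeMonoid.toList w) (FreeMonoid.toList z) hw hz)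

lemma relN_le_PN {X : Type} (N : ℕ) : ∀ u v, RelN X N u v → (PN X N) u v := by
  intro u v huv
  unfold RelN at huv
  obtain ⟨w, h1, h2⟩ | ⟨w, z, hw, hz, h1, h2⟩ := huv
  · subst h1; subst h2; exact PN_idem N _
  · subst h1; subst h2; exact PN_comm N _ _ hw hz


lemma hsum_replicate_inl {X : Type} (k : ℕ) (x : X) :
    hsum (List.replicate k (Sum.inl x) : List (X ⊕ X)) = (k : ℤ) := by
  induction k with
  | zero => simp
  | succ k ih => rw [List.replicate_succ, hsum_cons, ih]; simp [d]; try ring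

lemma hsum_replicate_inr {X : Type} (k : ℕ) (x : X) :
    hsum (List.replicate k (Sum.inr x) : List (X ⊕ X)) = -(k : ℤ) := by
  induction k with
  | zero => simp
  | succ k ih => rw [List.replicate_succ, hsum_cons, ih]; simp [d]; try ring

lemma winvL_replicate_inl {X : Type} (k : ℕ) (x : X) :
    winvL (List.replicate k (Sum.inl x) : List (X ⊕ X)) = List.replicate k (Sum.inr x) := by
  simp [winvL]

lemma winvL_replicate_inr {X : Type} (k : ℕ) (x : X) :
    winvL (List.replicate k (Sum.inr x) : List (X ⊕ X)) = List.replicate k (Sum.inl x) := by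
  simp [winvL]

lemma chi_up {X : Type} (L : ℤ) (hL : 0 < L) (x : X) : ∀ (k : ℕ) (h : ℤ), 0 ≤ h →
    chi L h (List.replicate k (Sum.inl x)) =
      if h ≤ L ∧ L < h + (k : ℤ) then [true] else [] := by
  intro k
  induction k with
  | zero =>
      intro h h0
      rw [List.replicate_zero, chi_nil, if_neg (by push_cast; omega)]
  | succ k ih =>
      intro h h0
      rw [List.replicate_succ, chi_cons]
      simp only [d, Sum.elim_inl]
      have hmin : min h (h + 1) = h := min_eq_left (by omega)
      unfold cr
      rw [hmin]
      by_cases hE : h = L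
      · rw [if_pos hE, ih (h + 1) (by omega), if_neg (by push_cast; omega),
          if_pos (by push_cast; omega)]
        simp
      · rw [if_neg hE, if_neg (by omega), ih (h + 1) (by omega), List.nil_append]
        have hiff : (h + 1 ≤ L ∧ L < h + 1 + (k : ℤ)) ↔
            (h ≤ L ∧ L < h + ((k + 1 : ℕ) : ℤ)) := by push_cast; omega
        simp only [hiff]

lemma chi_down_neg {X : Type} (L : ℤ) (hL : 0 < L) (x : X) : ∀ (k : ℕ) (h : ℤ), h ≤ 0 →
    chi L h (List.replicate k (Sum.inr x)) =
      if -L ≤ h ∧ h - (k : ℤ) < -L then [false] else [] := by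
  intro k
  induction k with
  | zero =>
      intro h h0
      rw [List.replicate_zero, chi_nil, if_neg (by push_cast; omega)]
  | succ k ih =>
      intro h h0
      rw [List.replicate_succ, chi_cons]
      simp only [d, Sum.elim_inr]
      have hmin : min h (h + -1) = h - 1 := by rw [min_eq_right (by omega)]; ring
      unfold cr
      rw [hmin]
      by_cases hE : h = -L
      · rw [if_neg (by omega), if_pos (by omega), ih (h + -1) (by omega),
          if_neg (by push_cast; omega), if_pos (by push_cast; omega)]
        simp
      · rw [if_neg (by omega), if_neg (by omega), ih (h + -1) (by omega), List.nil_append]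
        have hiff : (-L ≤ h + -1 ∧ h + -1 - (k : ℤ) < -L) ↔
            (-L ≤ h ∧ h - ((k + 1 : ℕ) : ℤ) < -L) := by push_cast; omega
        simp only [hiff]

lemma chi_down_high {X : Type} (L : ℤ) (hL : 0 < L) (x : X) : ∀ (k : ℕ) (h : ℤ),
    (k : ℤ) ≤ h →
    chi L h (List.replicate k (Sum.inr x)) =
      if h - (k : ℤ) ≤ L ∧ L < h then [true] else [] := by
  intro k
  induction k with
  | zero =>
      intro h h0
      rw [List.replicate_zero, chi_nil, if_neg (by push_cast; omega)]
  | succ k ih =>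
      intro h h0
      push_cast at h0
      rw [List.replicate_succ, chi_cons]
      simp only [d, Sum.elim_inr]
      have hmin : min h (h + -1) = h - 1 := by rw [min_eq_right (by omega)]; ring
      unfold cr
      rw [hmin]
      by_cases hE : h - 1 = L
      · rw [if_pos hE, ih (h + -1) (by push_cast; omega),
          if_neg (by push_cast; omega), if_pos (by push_cast; omega)]
        simp
      · rw [if_neg hE, if_neg (by omega), ih (h + -1) (by push_cast; omega), List.nil_append]
        have hiff : (h + -1 - (k : ℤ) ≤ L ∧ L < h + -1) ↔
            (h - ((k + 1 : ℕ) : ℤ) ≤ L ∧ L < h) := by push_cast; omega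
        simp only [hiff]

lemma chi_up_low {X : Type} (L : ℤ) (hL : 0 < L) (x : X) : ∀ (k : ℕ) (h : ℤ),
    h + (k : ℤ) ≤ 0 →
    chi L h (List.replicate k (Sum.inl x)) =
      if -L ≤ h + (k : ℤ) ∧ h < -L then [false] else [] := by
  intro k
  induction k with
  | zero =>
      intro h h0
      rw [List.replicate_zero, chi_nil, if_neg (by push_cast; omega)]
  | succ k ih =>
      intro h h0
      push_cast at h0
      rw [List.replicate_succ, chi_cons]
      simp only [d, Sum.elim_inl]
      have hmin : min h (h + 1) = h := min_eq_left (by omega)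
      unfold cr
      rw [hmin]
      by_cases hE : h = -L - 1
      · rw [if_neg (by omega), if_pos (by omega), ih (h + 1) (by push_cast; omega),
          if_neg (by push_cast; omega), if_pos (by push_cast; omega)]
        simp
      · rw [if_neg (by omega), if_neg (by omega), ih (h + 1) (by push_cast; omega),
          List.nil_append]
        have hiff : (-L ≤ h + 1 + (k : ℤ) ∧ h + 1 < -L) ↔
            (-L ≤ h + ((k + 1 : ℕ) : ℤ) ∧ h < -L) := by push_cast; omega
        simp only [hiff]

/-- The witness words. -/
def wit1 {X : Type} (x : X) (M : ℕ) : FreeMonoid (X ⊕ X) :=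
  FreeMonoid.ofList (List.replicate M (Sum.inl x))

def wit2 {X : Type} (x : X) (M : ℕ) : FreeMonoid (X ⊕ X) :=
  FreeMonoid.ofList (List.replicate M (Sum.inr x))

lemma not_PN_witness {X : Type} (x : X) (N : ℕ) :
    ¬ (PN X N) (wit1 x (N+2) * winvX (wit1 x (N+2)) * (wit2 x (N+2) * winvX (wit2 x (N+2))))
        (wit2 x (N+2) * winvX (wit2 x (N+2)) * (wit1 x (N+2) * winvX (wit1 x (N+2)))) := by
  intro hP
  have h := hP [] []
  set L : ℤ := (N : ℤ) + 1 with hLdef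
  have hL : 0 < L := by omega
  set M : ℕ := N + 2 with hMdef
  have hML : (M : ℤ) = L + 1 := by push_cast; omega
  have h1 : chi L 0 (List.replicate M (Sum.inl x) : List (X ⊕ X)) = [true] := by
    rw [chi_up L hL x M 0 le_rfl, if_pos ⟨by omega, by omega⟩]
  have h2 : chi L (M : ℤ) (List.replicate M (Sum.inr x) : List (X ⊕ X)) = [true] := by
    rw [chi_down_high L hL x M (M : ℤ) le_rfl, if_pos ⟨by omega, by omega⟩]
  have h3 : chi L 0 (List.replicate M (Sum.inr x) : List (X ⊕ X)) = [false] := by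
    rw [chi_down_neg L hL x M 0 le_rfl, if_pos ⟨by omega, by omega⟩]
  have h4 : chi L (-(M : ℤ)) (List.replicate M (Sum.inl x) : List (X ⊕ X)) = [false] := by
    rw [chi_up_low L hL x M (-(M : ℤ)) (by omega), if_pos ⟨by omega, by omega⟩]
  have ea : (0 : ℤ) + (M : ℤ) = (M : ℤ) := by ring
  have eb : (M : ℤ) + -(M : ℤ) = 0 := by ring
  have ec : (0 : ℤ) + -(M : ℤ) = -(M : ℤ) := by ring
  have ed : -(M : ℤ) + (M : ℤ) = 0 := by ring
  have hu : chi L 0 (List.replicate M (Sum.inl x) ++ (List.replicate M (Sum.inr x) ++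
      (List.replicate M (Sum.inr x) ++ (List.replicate M (Sum.inl x) : List (X ⊕ X))))) =
      [true, true, false, false] := by
    rw [chi_append, chi_append, chi_append, hsum_replicate_inl, hsum_replicate_inr,
      ea, eb, ec, h1, h2, h3, h4]
    rfl
  have hv : chi L 0 (List.replicate M (Sum.inr x) ++ (List.replicate M (Sum.inl x) ++
      (List.replicate M (Sum.inl x) ++ (List.replicate M (Sum.inr x) : List (X ⊕ X))))) =
      [false, false, true, true] := by
    rw [chi_append, chi_append, chi_append, hsum_replicate_inl, hsum_replicate_inr,
      ec, ed, ea, h3, h4, h1, h2]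
    rfl
  simp only [List.nil_append, List.append_nil] at h
  simp only [FreeMonoid.toList_mul, toList_winvX, wit1, wit2, FreeMonoid.toList_ofList,
    winvL_replicate_inl, winvL_replicate_inr, List.append_assoc] at h
  rw [hu, hv] at h
  simp at h


/-! ### The union of the bounded congruences -/

def ThetaSup (X : Type) : Con (FreeMonoid (X ⊕ X)) where
  r u v := ∃ N, (conGen (RelN X N)) u v
  iseqv := by
    refine ⟨fun x => ⟨0, (conGen (RelN X 0)).refl x⟩, ?_, ?_⟩
    · rintro x y ⟨N, h⟩; exact ⟨N, (conGen (RelN X N)).symm h⟩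
    · rintro x y z ⟨N1, h1⟩ ⟨N2, h2⟩
      have h1' := Con.conGen_mono (relN_mono (le_max_left N1 N2)) h1
      have h2' := Con.conGen_mono (relN_mono (le_max_right N1 N2)) h2
      exact ⟨max N1 N2, (conGen (RelN X (max N1 N2))).trans h1' h2'⟩
  mul' := by
    rintro w x y z ⟨N1, h1⟩ ⟨N2, h2⟩
    have h1' := Con.conGen_mono (relN_mono (le_max_left N1 N2)) h1
    have h2' := Con.conGen_mono (relN_mono (le_max_right N1 N2)) h2
    exact ⟨max N1 N2, (conGen (RelN X (max N1 N2))).mul h1' h2'⟩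

lemma conGen_fimRel_le_thetaSup (X : Type) : conGen (FIMRel X) ≤ ThetaSup X :=
  Con.conGen_le.mpr (fun u v h => by
    obtain ⟨N, hN⟩ := fimRel_relN u v h
    exact ⟨N, ConGen.Rel.of _ _ hN⟩)

lemma exists_bound {X : Type} (S : Set (FreeMonoid (X ⊕ X) × FreeMonoid (X ⊕ X)))
    (hfin : S.Finite) (hall : ∀ p ∈ S, (conGen (FIMRel X)) p.1 p.2) :
    ∃ N, ∀ p ∈ S, (conGen (RelN X N)) p.1 p.2 := by
  have key : ∀ p ∈ S, ∃ N, (conGen (RelN X N)) p.1 p.2 :=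
    fun p hp => conGen_fimRel_le_thetaSup X (hall p hp)
  clear hall
  refine (Set.Finite.induction_on
    (motive := fun s _ => (∀ p ∈ s, ∃ N, (conGen (RelN X N)) p.1 p.2) →
      ∃ N, ∀ p ∈ s, (conGen (RelN X N)) p.1 p.2) S hfin ?_ ?_) key
  · intro _; exact ⟨0, by simp⟩
  · intro a s ha hs ih hkey
    obtain ⟨Ns, hNs⟩ := ih (fun p hp => hkey p (Set.mem_insert_of_mem a hp))
    obtain ⟨Na, hNa⟩ := hkey a (Set.mem_insert a s)
    refine ⟨max Na Ns, ?_⟩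
    rintro p (rfl | hp)
    · exact Con.conGen_mono (relN_mono (le_max_left Na Ns)) hNa
    · exact Con.conGen_mono (relN_mono (le_max_right Na Ns)) (hNs p hp)

/-! ### Tietze-style reduction -/

lemma exists_finite_core {B A : Type} [Finite B] (θ : Con (FreeMonoid B))
    (Rel : Set (FreeMonoid A × FreeMonoid A)) (hRel : Rel.Finite)
    (e : (conGen fun u v => (u, v) ∈ Rel).Quotient ≃* θ.Quotient) :
    ∃ S : Set (FreeMonoid B × FreeMonoid B), S.Finite ∧ (∀ p ∈ S, θ p.1 p.2) ∧
      ∀ u v, θ u v → (conGen fun u' v' => (u', v') ∈ S) u v := by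
  classical
  set σ : Con (FreeMonoid A) := conGen fun u v => (u, v) ∈ Rel with hσ
  have hsurjθ : Function.Surjective θ.mk' := Con.mk'_surjective
  choose φ₀ hφ₀ using fun a : A => hsurjθ (e (σ.mk' (FreeMonoid.of a)))
  set φ : FreeMonoid A →* FreeMonoid B := FreeMonoid.lift φ₀ with hφdef
  have hsurje : Function.Surjective (e.toMonoidHom.comp σ.mk') :=
    e.surjective.comp Con.mk'_surjective
  choose ψ₀ hψ₀ using fun b : B => hsurje (θ.mk' (FreeMonoid.of b))
  set ψ : FreeMonoid B →* FreeMonoid A := FreeMonoid.lift ψ₀ with hψdef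
  have hφ : ∀ c, θ.mk' (φ c) = e (σ.mk' c) := by
    have heq : θ.mk'.comp φ = (e.toMonoidHom.comp σ.mk') := by
      refine FreeMonoid.hom_eq (fun a => ?_)
      simp only [MonoidHom.comp_apply, hφdef, FreeMonoid.lift_eval_of]
      exact hφ₀ a
    intro c
    exact DFunLike.congr_fun heq c
  have hψ : ∀ w, e (σ.mk' (ψ w)) = θ.mk' w := by
    have heq : (e.toMonoidHom.comp σ.mk').comp ψ = θ.mk' := by
      refine FreeMonoid.hom_eq (fun b => ?_)
      simp only [MonoidHom.comp_apply, hψdef, FreeMonoid.lift_eval_of]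
      exact hψ₀ b
    intro w
    exact DFunLike.congr_fun heq w
  set S : Set (FreeMonoid B × FreeMonoid B) :=
    ((fun p : FreeMonoid A × FreeMonoid A => (φ p.1, φ p.2)) '' Rel) ∪
      (Set.range fun b : B => (FreeMonoid.of b, φ (ψ (FreeMonoid.of b)))) with hSdef
  have hSfin : S.Finite := (hRel.image _).union (Set.finite_range _)
  have hSθ : ∀ p ∈ S, θ p.1 p.2 := by
    rintro p (⟨q, hq, rfl⟩ | ⟨b, rfl⟩)
    · have h1 : σ q.1 q.2 := ConGen.Rel.of _ _ hq
      have h2 : σ.mk' q.1 = σ.mk' q.2 := (Con.eq σ).mpr h1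
      have h3 : θ.mk' (φ q.1) = θ.mk' (φ q.2) := by rw [hφ, hφ, h2]
      exact (Con.eq θ).mp h3
    · have h3 : θ.mk' (FreeMonoid.of b) = θ.mk' (φ (ψ (FreeMonoid.of b))) := by
        rw [hφ, hψ]
      exact (Con.eq θ).mp h3
  refine ⟨S, hSfin, hSθ, ?_⟩
  set τ : Con (FreeMonoid B) := conGen (fun u' v' => (u', v') ∈ S) with hτ
  have L1 : ∀ w, τ w (φ (ψ w)) := by
    intro w
    induction w using FreeMonoid.recOn with
    | one =>
        have h1 : φ (ψ (1 : FreeMonoid B)) = 1 := by rw [map_one, map_one]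
        rw [h1]; exact τ.refl 1
    | of_mul x xs ih =>
        have h1 : φ (ψ (FreeMonoid.of x * xs)) = φ (ψ (FreeMonoid.of x)) * φ (ψ xs) := by
          rw [map_mul, map_mul]
        rw [h1]
        exact τ.mul (ConGen.Rel.of _ _ (Or.inr ⟨x, rfl⟩)) ih
  have L2 : ∀ u v, σ u v → τ (φ u) (φ v) := by
    have hle : σ ≤ Con.comap φ (map_mul φ) τ :=
      Con.conGen_le.mpr (fun x y hxy => ConGen.Rel.of _ _ (Or.inl ⟨(x, y), hxy, rfl⟩))
    exact fun u v huv => hle huv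
  intro u v huv
  have h3 : θ.mk' u = θ.mk' v := (Con.eq θ).mpr huv
  have h4 : e (σ.mk' (ψ u)) = e (σ.mk' (ψ v)) := by rw [hψ, hψ, h3]
  have h5 : σ (ψ u) (ψ v) := (Con.eq σ).mp (e.injective h4)
  exact τ.trans (L1 u) (τ.trans (L2 _ _ h5) (τ.symm (L1 v)))

/-! ### Finiteness of the generating set -/

def Gl {X : Type} (l : List (X ⊕ X)) : Set X := {x | x ∈ l.map (Sum.elim id id)}

lemma Gl_finite {X : Type} (l : List (X ⊕ X)) : (Gl l).Finite :=
  List.finite_toSet _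

lemma mem_Gl {X : Type} (l : List (X ⊕ X)) (y : X) :
    y ∈ Gl l ↔ ∃ c ∈ l, Sum.elim id id c = y := by
  simp [Gl]

lemma Gl_append {X : Type} (l₁ l₂ : List (X ⊕ X)) : Gl (l₁ ++ l₂) = Gl l₁ ∪ Gl l₂ := by
  ext y; simp [mem_Gl]; tauto

lemma elim_swap {X : Type} (c : X ⊕ X) : Sum.elim id id (Sum.swap c) = Sum.elim id id c := by
  cases c <;> rfl

lemma Gl_winvL {X : Type} (l : List (X ⊕ X)) : Gl (winvL l) = Gl l := by
  ext y
  simp only [mem_Gl, winvL, List.mem_map, List.mem_reverse]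
  constructor
  · rintro ⟨c, ⟨c', hc', rfl⟩, hy⟩
    exact ⟨c', hc', by rw [← elim_swap]; exact hy⟩
  · rintro ⟨c, hc, hy⟩
    exact ⟨Sum.swap c, ⟨c, hc, rfl⟩, by rw [elim_swap]; exact hy⟩

def PsetCon (X : Type) : Con (FreeMonoid (X ⊕ X)) where
  r u v := Gl (FreeMonoid.toList u) = Gl (FreeMonoid.toList v)
  iseqv := ⟨fun _ => rfl, Eq.symm, Eq.trans⟩
  mul' := by
    intro w x y z h1 h2
    show Gl _ = Gl _
    rw [FreeMonoid.toList_mul, FreeMonoid.toList_mul, Gl_append, Gl_append, h1, h2]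

lemma fimrel_le_pset (X : Type) : conGen (FIMRel X) ≤ PsetCon X := by
  refine Con.conGen_le.mpr (fun u v h => ?_)
  induction h with
  | idem w =>
      show Gl _ = Gl _
      simp only [FreeMonoid.toList_mul, toList_winvX, Gl_append, Gl_winvL]
      ext y; simp; try tauto
  | comm w z =>
      show Gl _ = Gl _
      simp only [FreeMonoid.toList_mul, toList_winvX, Gl_append, Gl_winvL]
      ext y; simp; try tauto

lemma finiteX_of_fp {X : Type} (h : IsFinitelyPresentedMonoid (FIM X)) : Finite X := by
  classical
  obtain ⟨A, hA, Rel, hRelFin, ⟨e⟩⟩ := h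
  haveI := hA
  set θ : Con (FreeMonoid (X ⊕ X)) := conGen (FIMRel X) with hθ
  set σ : Con (FreeMonoid A) := conGen fun u v => (u, v) ∈ Rel with hσ
  have hsurjθ : Function.Surjective θ.mk' := Con.mk'_surjective
  have hsurj : Function.Surjective (e.toMonoidHom.comp σ.mk') :=
    e.surjective.comp Con.mk'_surjective
  choose t ht using fun a : A => hsurjθ (e (σ.mk' (FreeMonoid.of a)))
  have hhom : ∀ c, θ.mk' ((FreeMonoid.lift t) c) = e (σ.mk' c) := by
    have heq : θ.mk'.comp (FreeMonoid.lift t) = (e.toMonoidHom.comp σ.mk') := by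
      refine FreeMonoid.hom_eq (fun a => ?_)
      simp only [MonoidHom.comp_apply, FreeMonoid.lift_eval_of]
      exact ht a
    intro c
    exact DFunLike.congr_fun heq c
  set Y : Set X := ⋃ a : A, Gl (FreeMonoid.toList (t a)) with hY
  have hYfin : Y.Finite := Set.finite_iUnion (fun a => Gl_finite _)
  have hsub : ∀ c : FreeMonoid A, Gl (FreeMonoid.toList ((FreeMonoid.lift t) c)) ⊆ Y := by
    intro c
    induction c using FreeMonoid.recOn with
    | one =>
        rw [map_one]
        intro y hy
        rw [mem_Gl] at hy
        obtain ⟨c', hc', _⟩ := hy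
        simp [FreeMonoid.toList_one] at hc'
    | of_mul x xs ih =>
        rw [map_mul, FreeMonoid.toList_mul, Gl_append]
        have hx : (FreeMonoid.lift t) (FreeMonoid.of x) = t x := FreeMonoid.lift_eval_of t x
        rw [hx]
        exact Set.union_subset (Set.subset_iUnion (fun a => Gl (FreeMonoid.toList (t a))) x) ih
  have hX : ∀ x : X, x ∈ Y := by
    intro x
    obtain ⟨c, hc⟩ := hsurj (θ.mk' (FreeMonoid.of (Sum.inl x)))
    have h1 : θ.mk' ((FreeMonoid.lift t) c) = θ.mk' (FreeMonoid.of (Sum.inl x)) := by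
      rw [hhom]; exact hc
    have h2 : θ ((FreeMonoid.lift t) c) (FreeMonoid.of (Sum.inl x)) := (Con.eq θ).mp h1
    have h3 := fimrel_le_pset X h2
    have h4 : x ∈ Gl (FreeMonoid.toList ((FreeMonoid.lift t) c)) := by
      have : Gl (FreeMonoid.toList ((FreeMonoid.lift t) c)) =
          Gl (FreeMonoid.toList (FreeMonoid.of (Sum.inl x))) := h3
      rw [this, mem_Gl]
      exact ⟨Sum.inl x, by simp [FreeMonoid.toList_of], rfl⟩
    exact hsub c h4
  exact Set.finite_univ_iff.mp (hYfin.subset (fun x _ => hX x))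

end FIMAux
/-- A free inverse monoid on a nonempty set is not finitely presented as a monoid. -/
theorem fim_not_finitely_presented (X : Type) [Nonempty X] :
    ¬ IsFinitelyPresentedMonoid (FIM X) := by
  intro h
  haveI hXfin : Finite X := FIMAux.finiteX_of_fp h
  obtain ⟨A, hA, Rel, hRelFin, ⟨e⟩⟩ := h
  haveI := hA
  obtain ⟨S, hSfin, hSθ, hle⟩ := FIMAux.exists_finite_core (conGen (FIMRel X)) Rel hRelFin e
  obtain ⟨N, hN⟩ := FIMAux.exists_bound S hSfin hSθ
  obtain ⟨x₀⟩ := ‹Nonempty X›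
  have hwv : (conGen (FIMRel X))
      (FIMAux.wit1 x₀ (N+2) * winvX (FIMAux.wit1 x₀ (N+2)) *
        (FIMAux.wit2 x₀ (N+2) * winvX (FIMAux.wit2 x₀ (N+2))))
      (FIMAux.wit2 x₀ (N+2) * winvX (FIMAux.wit2 x₀ (N+2)) *
        (FIMAux.wit1 x₀ (N+2) * winvX (FIMAux.wit1 x₀ (N+2)))) :=
    ConGen.Rel.of _ _ (FIMRel.comm (FIMAux.wit1 x₀ (N+2)) (FIMAux.wit2 x₀ (N+2)))
  have h1 := hle _ _ hwv
  have h2 := (Con.conGen_le.mpr (fun x y hxy => hN (x, y) hxy)) h1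
  have h3 := (Con.conGen_le.mpr (FIMAux.relN_le_PN N)) h2
  exact FIMAux.not_PN_witness x₀ N h3
end

section
/- The kernel of d₁ is not finitely generated as a left R-module. -/
/-- The formal inverse of a word over `{x, y}` (with `x = true`, `y = false`):
reverse the word and interchange the two letters. -/
def winv (w : FreeMonoid Bool) : FreeMonoid Bool :=
  FreeMonoid.ofList ((FreeMonoid.toList w).reverse.map Bool.not)

/-- The defining relations of the free monogenic inverse monoid. -/
inductive FIMRel1 : FreeMonoid Bool → FreeMonoid Bool → Prop
  | idem (w : FreeMonoid Bool) : FIMRel1 (w * winv w * w) w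
  | comm (w z : FreeMonoid Bool) :
      FIMRel1 (w * winv w * (z * winv z)) (z * winv z * (w * winv w))

/-- The free monogenic inverse monoid. -/
abbrev FIM1 := (conGen FIMRel1).Quotient

/-- The generator `x` of the free monogenic inverse monoid. -/
def mx : FIM1 := (conGen FIMRel1).mk' (FreeMonoid.of true)

/-- The (generalized) inverse `y` of the generator. -/
def my : FIM1 := (conGen FIMRel1).mk' (FreeMonoid.of false)

/-- The monoid algebra `ℤM` of the free monogenic inverse monoid. -/
abbrev R : Type := MonoidAlgebra ℤ FIM1

/-- The image of the generator `x` in `ℤM`. -/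
noncomputable def Xg : R := MonoidAlgebra.of ℤ FIM1 mx

/-- The image of `y` in `ℤM`. -/
noncomputable def Yg : R := MonoidAlgebra.of ℤ FIM1 my

/-- The left `R`-linear map `R × R → R` with `(1,0) ↦ x - 1` and `(0,1) ↦ y - 1`. -/
noncomputable def d1 : (R × R) →ₗ[R] R where
  toFun p := p.1 * (Xg - 1) + p.2 * (Yg - 1)
  map_add' p q := by
    simp only [Prod.fst_add, Prod.snd_add, add_mul]
    abel
  map_smul' r p := by
    simp only [Prod.smul_fst, Prod.smul_snd, smul_eq_mul, RingHom.id_apply, mul_add, mul_assoc]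

-- ===== The Munn monoid =====

def PM := {p : ℤ × ℤ × ℤ // p.1 ≤ p.2.1 ∧ p.2.1 ≤ p.2.2 ∧ p.1 ≤ 0 ∧ 0 ≤ p.2.2}

namespace PM

def pa (p : PM) : ℤ := p.1.1
def pb (p : PM) : ℤ := p.1.2.1
def pc (p : PM) : ℤ := p.1.2.2

lemma prop (p : PM) : pa p ≤ pb p ∧ pb p ≤ pc p ∧ pa p ≤ 0 ∧ 0 ≤ pc p := p.2

@[ext] lemma ext {p q : PM} (h1 : pa p = pa q) (h2 : pb p = pb q) (h3 : pc p = pc q) : p = q := by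
  apply Subtype.ext
  obtain ⟨⟨a,b,c⟩,hp⟩ := p; obtain ⟨⟨a',b',c'⟩,hq⟩ := q
  simp only [pa,pb,pc] at h1 h2 h3
  simp_all

instance : Mul PM :=
  ⟨fun p q => ⟨(min (pa p) (pb p + pa q), pb p + pb q, max (pc p) (pb p + pc q)), by
    obtain ⟨h1,h2,h3,h4⟩ := p.prop; obtain ⟨g1,g2,g3,g4⟩ := q.prop
    refine ⟨?_,?_,?_,?_⟩ <;> simp only [pa,pb,pc] at * <;> omega⟩⟩

instance : One PM := ⟨⟨(0,0,0), by refine ⟨le_refl _, le_refl _, le_refl _, le_refl _⟩⟩⟩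

@[simp] lemma pa_mul (p q : PM) : pa (p * q) = min (pa p) (pb p + pa q) := rfl
@[simp] lemma pb_mul (p q : PM) : pb (p * q) = pb p + pb q := rfl
@[simp] lemma pc_mul (p q : PM) : pc (p * q) = max (pc p) (pb p + pc q) := rfl
@[simp] lemma pa_one : pa (1 : PM) = 0 := rfl
@[simp] lemma pb_one : pb (1 : PM) = 0 := rfl
@[simp] lemma pc_one : pc (1 : PM) = 0 := rfl

instance : Monoid PM where
  mul_assoc p q r := by
    obtain ⟨h1,h2,h3,h4⟩ := p.prop
    ext <;> simp <;> omega
  one_mul p := by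
    obtain ⟨h1,h2,h3,h4⟩ := p.prop
    ext <;> simp <;> omega
  mul_one p := by
    obtain ⟨h1,h2,h3,h4⟩ := p.prop
    ext <;> simp <;> omega

def gX : PM := ⟨(0,1,1), by norm_num⟩
def gY : PM := ⟨(-1,-1,0), by norm_num⟩

@[simp] lemma pa_gX : pa gX = 0 := rfl
@[simp] lemma pb_gX : pb gX = 1 := rfl
@[simp] lemma pc_gX : pc gX = 1 := rfl
@[simp] lemma pa_gY : pa gY = -1 := rfl
@[simp] lemma pb_gY : pb gY = -1 := rfl
@[simp] lemma pc_gY : pc gY = 0 := rfl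

def pinv (p : PM) : PM := ⟨(pa p - pb p, -pb p, pc p - pb p), by
  obtain ⟨h1,h2,h3,h4⟩ := p.prop; refine ⟨?_,?_,?_,?_⟩ <;> simp only [pa,pb,pc] at * <;> omega⟩

@[simp] lemma pa_pinv (p : PM) : pa (pinv p) = pa p - pb p := rfl
@[simp] lemma pb_pinv (p : PM) : pb (pinv p) = -pb p := rfl
@[simp] lemma pc_pinv (p : PM) : pc (pinv p) = pc p - pb p := rfl

lemma pinv_mul (p q : PM) : pinv (p * q) = pinv q * pinv p := by
  ext <;> simp <;> omega

end PM

open PM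

noncomputable def Lh : FreeMonoid Bool →* PM := FreeMonoid.lift (fun t => if t then gX else gY)

@[simp] lemma Lh_of_true : Lh (FreeMonoid.of true) = gX := by simp [Lh]
@[simp] lemma Lh_of_false : Lh (FreeMonoid.of false) = gY := by simp [Lh]

lemma winv_of (t : Bool) : winv (FreeMonoid.of t) = FreeMonoid.of (!t) := by
  simp [winv, FreeMonoid.toList_of]

lemma winv_mul (u v : FreeMonoid Bool) : winv (u * v) = winv v * winv u := by
  simp [winv, FreeMonoid.toList_mul, ← FreeMonoid.ofList_append]

lemma Lh_winv (w : FreeMonoid Bool) : Lh (winv w) = pinv (Lh w) := by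
  induction w using FreeMonoid.recOn with
  | one =>
    have : winv (1 : FreeMonoid Bool) = 1 := rfl
    rw [this]; ext <;> simp
  | of_mul t w ih =>
    rw [winv_mul, winv_of, map_mul, map_mul, pinv_mul, ih]
    congr 1
    cases t <;> (ext <;> simp)

lemma Lh_rel : ∀ u v, FIMRel1 u v → Lh u = Lh v := by
  rintro u v (⟨⟩ | ⟨w, z⟩)
  · obtain ⟨h1,h2,h3,h4⟩ := (Lh v).prop
    simp only [map_mul, Lh_winv]
    ext <;> simp <;> omega
  ·
    obtain ⟨h1,h2,h3,h4⟩ := (Lh w).prop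
    obtain ⟨g1,g2,g3,g4⟩ := (Lh z).prop
    simp only [map_mul, Lh_winv]
    ext <;> simp <;> omega

noncomputable def φ : FIM1 →* PM :=
  Con.lift _ Lh (Con.conGen_le.mpr (fun u v h => (Con.ker_rel Lh).mpr (Lh_rel u v h)))

lemma φ_mk (w : FreeMonoid Bool) : φ ((conGen FIMRel1).mk' w) = Lh w := Con.lift_mk' _ _

@[simp] lemma φ_mx : φ mx = gX := by rw [mx, φ_mk]; simp
@[simp] lemma φ_my : φ my = gY := by rw [my, φ_mk]; simp


-- ===== ℤ-linear evaluation functionals =====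

noncomputable def E (χ : FIM1 → ℤ) : R →+ ℤ :=
  (Finsupp.liftAddHom (fun m => AddMonoidHom.mulLeft (χ m))).comp
    MonoidAlgebra.coeffAddEquiv.toAddMonoidHom

lemma E_apply (χ : FIM1 → ℤ) (v : R) : E χ v = v.coeff.sum (fun m x => χ m * x) := rfl

lemma E_single (χ : FIM1 → ℤ) (m : FIM1) (x : ℤ) :
    E χ (MonoidAlgebra.single m x) = χ m * x := Finsupp.liftAddHom_apply_single _ _ _

lemma E_congr {χ₁ χ₂ : FIM1 → ℤ} (h : ∀ m, χ₁ m = χ₂ m) (v : R) : E χ₁ v = E χ₂ v := by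
  have : χ₁ = χ₂ := funext h
  rw [this]

lemma E_zero_fun (v : R) : E (fun _ => 0) v = 0 := by
  rw [E_apply]
  exact Finset.sum_eq_zero (fun m _ => by simp)

lemma E_add_fun (χ₁ χ₂ : FIM1 → ℤ) (v : R) :
    E (fun m => χ₁ m + χ₂ m) v = E χ₁ v + E χ₂ v := by
  simp only [E_apply]
  rw [← Finsupp.sum_add]
  congr 1; funext m x; ring

lemma E_support {χ : FIM1 → ℤ} {v : R} (h : ∀ m ∈ v.coeff.support, χ m = 0) : E χ v = 0 := by
  rw [E_apply]
  exact Finset.sum_eq_zero (fun m hm => by simp [h m hm])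

lemma E_mul (χ : FIM1 → ℤ) (r v : R) :
    E χ (r * v) = r.coeff.sum (fun m' x' => x' * E (fun m => χ (m' * m)) v) := by
  rw [MonoidAlgebra.mul_def, map_finsuppSum]
  refine Finsupp.sum_congr (fun m' _ => ?_)
  rw [map_finsuppSum, E_apply, Finsupp.mul_sum]
  refine Finsupp.sum_congr (fun m _ => ?_)
  rw [E_single]; ring

lemma E_of_mul (χ : FIM1 → ℤ) (m' : FIM1) (v : R) :
    E χ (MonoidAlgebra.of ℤ FIM1 m' * v) = E (fun m => χ (m' * m)) v := by
  rw [MonoidAlgebra.of_apply, show (MonoidAlgebra.single m' (1:ℤ) : R) * v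
      = v.coeff.sum (fun m x => MonoidAlgebra.single (m' * m) ((1:ℤ) * x)) from ?_]
  · rw [map_finsuppSum, E_apply]
    refine Finsupp.sum_congr (fun m _ => ?_)
    rw [one_mul]
    exact E_single _ _ _
  · rw [MonoidAlgebra.mul_def, MonoidAlgebra.coeff_single, Finsupp.sum_single_index]
    simp [Finsupp.sum]

lemma E_mul_of (χ : FIM1 → ℤ) (m₀ : FIM1) (v : R) :
    E χ (v * MonoidAlgebra.of ℤ FIM1 m₀) = E (fun m => χ (m * m₀)) v := by
  rw [MonoidAlgebra.of_apply, show (v : R) * MonoidAlgebra.single m₀ (1:ℤ)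
      = v.coeff.sum (fun m x => MonoidAlgebra.single (m * m₀) (x * 1)) from ?_]
  · rw [map_finsuppSum, E_apply]
    refine Finsupp.sum_congr (fun m _ => ?_)
    rw [mul_one]
    exact E_single _ _ _
  · rw [MonoidAlgebra.mul_def]
    refine Finsupp.sum_congr (fun m _ => ?_)
    rw [MonoidAlgebra.coeff_single, Finsupp.sum_single_index]
    simp

-- ===== indicator functions =====

noncomputable def χcol (A₀ : ℤ) (m : FIM1) : ℤ :=
  if pa (φ m) = A₀ ∧ pb (φ m) = A₀ then 1 else 0

noncomputable def χτ (A₀ C₀ : ℤ) (m : FIM1) : ℤ :=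
  if pa (φ m) = A₀ ∧ pb (φ m) = A₀ ∧ C₀ < pc (φ m) then 1 else 0

noncomputable def χT (A₀ : ℤ) (m : FIM1) : ℤ :=
  if pa (φ m) < A₀ then 1 else 0

lemma χT_mul_mx (A₀ : ℤ) (m : FIM1) : χT A₀ (m * mx) = χT A₀ m := by
  obtain ⟨h1,h2,h3,h4⟩ := (φ m).prop
  simp only [χT, map_mul, φ_mx, pa_mul, pa_gX]
  congr 1
  simp only [eq_iff_iff]
  omega

lemma χT_mul_my (A₀ : ℤ) (m : FIM1) : χT A₀ (m * my) = χT A₀ m + χcol A₀ m := by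
  obtain ⟨h1,h2,h3,h4⟩ := (φ m).prop
  simp only [χT, χcol, map_mul, φ_my, pa_mul, pa_gY]
  split_ifs <;> omega

/-- column sums of the second component of any kernel element vanish -/
lemma col_ker {u v : R} (h : u * (Xg - 1) + v * (Yg - 1) = 0) (A₀ : ℤ) :
    E (χcol A₀) v = 0 := by
  have h0 : E (χT A₀) (u * (Xg - 1) + v * (Yg - 1)) = 0 := by rw [h, map_zero]
  rw [mul_sub, mul_sub, mul_one, mul_one, map_add, map_sub, map_sub, Xg, Yg,
    E_mul_of, E_mul_of] at h0
  have e1 : E (fun m => χT A₀ (m * mx)) u = E (χT A₀) u :=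
    E_congr (fun m => χT_mul_mx A₀ m) u
  have e2 : E (fun m => χT A₀ (m * my)) v = E (χT A₀) v + E (χcol A₀) v := by
    rw [E_congr (fun m => χT_mul_my A₀ m) v]
    exact E_add_fun _ _ v
  rw [e1, e2] at h0
  omega

-- ===== translation identities =====

lemma χcol_mul (A₀ : ℤ) (m' m : FIM1) :
    χcol A₀ (m' * m) =
      if A₀ ≤ pa (φ m') then χcol (A₀ - pb (φ m')) m else 0 := by
  obtain ⟨h1,h2,h3,h4⟩ := (φ m).prop
  obtain ⟨g1,g2,g3,g4⟩ := (φ m').prop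
  simp only [χcol, map_mul, pa_mul, pb_mul]
  split_ifs <;> omega

lemma χτ_mul (A₀ C₀ : ℤ) (m' m : FIM1) :
    χτ A₀ C₀ (m' * m) =
      if A₀ ≤ pa (φ m') then
        (if C₀ < pc (φ m') then χcol (A₀ - pb (φ m')) m
         else χτ (A₀ - pb (φ m')) (C₀ - pb (φ m')) m)
      else 0 := by
  obtain ⟨h1,h2,h3,h4⟩ := (φ m).prop
  obtain ⟨g1,g2,g3,g4⟩ := (φ m').prop
  simp only [χτ, χcol, map_mul, pa_mul, pb_mul, pc_mul]
  split_ifs <;> omega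

-- ===== vanishing on the span of a finite kernel-generating set =====

def GoodZ (N₀ : ℤ) (z : R × R) : Prop :=
  (∀ A₀ : ℤ, E (χcol A₀) z.2 = 0) ∧
  (∀ A₀ C₀ : ℤ, N₀ ≤ C₀ - A₀ → E (χτ A₀ C₀) z.2 = 0)

lemma GoodZ_smul (N₀ : ℤ) (r : R) (z : R × R) (hz : GoodZ N₀ z) : GoodZ N₀ (r • z) := by
  obtain ⟨hcol, hτ⟩ := hz
  have hsnd : (r • z).2 = r * z.2 := rfl
  constructor
  · intro A₀
    rw [hsnd, E_mul]
    refine Finset.sum_eq_zero (fun m' _ => ?_)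
    have : E (fun m => χcol A₀ (m' * m)) z.2 = 0 := by
      by_cases hc : A₀ ≤ pa (φ m')
      · rw [E_congr (fun m => by rw [χcol_mul, if_pos hc]) z.2]
        exact hcol _
      · rw [E_congr (fun m => by rw [χcol_mul, if_neg hc]) z.2]
        exact E_zero_fun _
    simp [this]
  · intro A₀ C₀ hN
    rw [hsnd, E_mul]
    refine Finset.sum_eq_zero (fun m' _ => ?_)
    have : E (fun m => χτ A₀ C₀ (m' * m)) z.2 = 0 := by
      by_cases hc : A₀ ≤ pa (φ m')
      · by_cases hcc : C₀ < pc (φ m')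
        · rw [E_congr (fun m => by rw [χτ_mul, if_pos hc, if_pos hcc]) z.2]
          exact hcol _
        · rw [E_congr (fun m => by rw [χτ_mul, if_pos hc, if_neg hcc]) z.2]
          exact hτ _ _ (by omega)
      · rw [E_congr (fun m => by rw [χτ_mul, if_neg hc]) z.2]
        exact E_zero_fun _
    simp [this]

lemma span_vanish (F : Finset (R × R)) (hF : ∀ g ∈ F, d1 g = 0) (N₀ : ℤ)
    (hbound : ∀ g ∈ F, ∀ m ∈ g.2.coeff.support, pc (φ m) - pa (φ m) < N₀) :
    ∀ z ∈ Submodule.span R (F : Set (R × R)), GoodZ N₀ z := by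
  intro z hz
  refine Submodule.span_induction (fun g hg => ?_) ?_ (fun x y _ _ hx hy => ?_)
    (fun r x _ hx => GoodZ_smul N₀ r x hx) hz
  · constructor
    · intro A₀
      have hg' : g.1 * (Xg - 1) + g.2 * (Yg - 1) = 0 := hF g hg
      exact col_ker hg' A₀
    · intro A₀ C₀ hN
      refine E_support (fun m hm => ?_)
      have hb := hbound g hg m hm
      simp only [χτ]
      split_ifs with hcond
      · exfalso; omega
      · rfl
  · exact ⟨fun A₀ => by simp, fun A₀ C₀ _ => by simp⟩
  · exact ⟨fun A₀ => by rw [Prod.snd_add, map_add, hx.1 A₀, hy.1 A₀, add_zero],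
      fun A₀ C₀ hN => by rw [Prod.snd_add, map_add, hx.2 A₀ C₀ hN, hy.2 A₀ C₀ hN, add_zero]⟩

-- ===== Fox derivative cycles =====

noncomputable def mkF : FreeMonoid Bool →* FIM1 := (conGen FIMRel1).mk'

noncomputable def fox : List Bool → R × R
  | [] => 0
  | t :: w => (if t then ((1:R), (0:R)) else ((0:R), (1:R))) +
      (MonoidAlgebra.of ℤ FIM1 (mkF (FreeMonoid.of t))) • fox w

lemma ofList_cons (t : Bool) (w : List Bool) :
    FreeMonoid.ofList (t :: w) = FreeMonoid.of t * FreeMonoid.ofList w := rfl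

lemma d1_fox (w : List Bool) :
    d1 (fox w) = MonoidAlgebra.of ℤ FIM1 (mkF (FreeMonoid.ofList w)) - 1 := by
  induction w with
  | nil =>
    simp only [fox, map_zero, show FreeMonoid.ofList ([] : List Bool) = 1 from rfl, map_one]
    rw [sub_self]
  | cons t w ih =>
    rw [fox, map_add, map_smul, ih, smul_sub, smul_eq_mul, smul_eq_mul, mul_one,
      ← map_mul, ofList_cons, map_mul]
    have hbase : d1 (if t then ((1:R), (0:R)) else ((0:R), (1:R))) =
        MonoidAlgebra.of ℤ FIM1 (mkF (FreeMonoid.of t)) - 1 := by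
      cases t
      · show (0:R) * (Xg - 1) + (1:R) * (Yg - 1) = _
        simp [Yg, mkF, my]
      · show (1:R) * (Xg - 1) + (0:R) * (Yg - 1) = _
        simp [Xg, mkF, mx]
    rw [hbase, map_mul, map_mul]
    abel

noncomputable def foxY : (FIM1 → ℤ) → List Bool → ℤ
  | _, [] => 0
  | χ, t :: w => (if t then 0 else χ 1) + foxY (fun m => χ (mkF (FreeMonoid.of t) * m)) w

lemma E_fox (w : List Bool) : ∀ χ : FIM1 → ℤ, E χ (fox w).2 = foxY χ w := by
  induction w with
  | nil => intro χ; simp [fox, foxY]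
  | cons t w ih =>
    intro χ
    have hsnd : (fox (t :: w)).2 =
        (if t then (0:R) else (1:R)) + MonoidAlgebra.of ℤ FIM1 (mkF (FreeMonoid.of t)) * (fox w).2 := by
      rw [fox, Prod.snd_add]
      congr 1
      cases t <;> rfl
    rw [hsnd, map_add, E_of_mul, ih]
    congr 1
    cases t <;> simp [MonoidAlgebra.one_def, E_single]

lemma foxY_rep_true (k : ℕ) : ∀ (χ : FIM1 → ℤ) (rest : List Bool),
    foxY χ (List.replicate k true ++ rest) = foxY (fun m => χ (mx ^ k * m)) rest := by
  induction k with
  | zero => intro χ rest; simp [foxY]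
  | succ k ih =>
    intro χ rest
    rw [List.replicate_succ, List.cons_append]
    show (if true then 0 else χ 1) + _ = _
    rw [if_pos rfl, zero_add, ih]
    congr 1
    funext m
    have : mkF (FreeMonoid.of true) = mx := rfl
    rw [this, ← mul_assoc, ← pow_succ']

lemma foxY_rep_false (k : ℕ) : ∀ (χ : FIM1 → ℤ) (rest : List Bool),
    foxY χ (List.replicate k false ++ rest) =
      (Finset.range k).sum (fun j => χ (my ^ j)) + foxY (fun m => χ (my ^ k * m)) rest := by
  induction k with
  | zero => intro χ rest; simp [foxY]
  | succ k ih =>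
    intro χ rest
    rw [List.replicate_succ, List.cons_append]
    show (if false then 0 else χ 1) + _ = _
    rw [if_neg (Bool.false_ne_true)]
    have : mkF (FreeMonoid.of false) = my := rfl
    rw [this, ih]
    rw [Finset.sum_range_succ' (fun j => χ (my ^ j)) k]
    have h1 : ∀ j, χ (my * my ^ j) = χ (my ^ (j+1)) := fun j => by rw [← pow_succ']
    have h2 : (fun m => χ (my * (my ^ k * m))) = (fun m => χ (my ^ (k+1) * m)) := by
      funext m; rw [← mul_assoc, ← pow_succ']
    simp only [h1, h2, pow_zero]
    ring

-- ===== power computations in PM =====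

lemma gX_pow (k : ℕ) : pa (gX ^ k) = 0 ∧ pb (gX ^ k) = k ∧ pc (gX ^ k) = k := by
  induction k with
  | zero => simp
  | succ k ih =>
    obtain ⟨h1, h2, h3⟩ := ih
    rw [pow_succ]
    refine ⟨?_, ?_, ?_⟩ <;> simp [h1, h2, h3] <;> omega

lemma gY_pow (k : ℕ) : pa (gY ^ k) = -k ∧ pb (gY ^ k) = -k ∧ pc (gY ^ k) = 0 := by
  induction k with
  | zero => simp
  | succ k ih =>
    obtain ⟨h1, h2, h3⟩ := ih
    rw [pow_succ]
    refine ⟨?_, ?_, ?_⟩ <;> simp [h1, h2, h3] <;> push_cast <;> omega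

lemma eval1 (n j : ℕ) (C₀ : ℤ) :
    χτ 0 C₀ (mx ^ n * my ^ j) = if (n:ℤ) = j ∧ C₀ < n then 1 else 0 := by
  obtain ⟨hx1, hx2, hx3⟩ := gX_pow n
  obtain ⟨hy1, hy2, hy3⟩ := gY_pow j
  simp only [χτ, map_mul, map_pow, φ_mx, φ_my, pa_mul, pb_mul, pc_mul,
    hx1, hx2, hx3, hy1, hy2, hy3]
  split_ifs <;> omega

lemma eval2 (n j : ℕ) (C₀ : ℤ) :
    χτ 0 C₀ (my * (mx * (mx ^ n * my ^ j))) = 0 := by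
  obtain ⟨hx1, hx2, hx3⟩ := gX_pow n
  obtain ⟨hy1, hy2, hy3⟩ := gY_pow j
  simp only [χτ, map_mul, map_pow, φ_mx, φ_my, pa_mul, pb_mul, pc_mul,
    hx1, hx2, hx3, hy1, hy2, hy3]
  rw [if_neg]
  rintro ⟨h, -⟩
  simp only [pa_gY, pb_gY, pa_gX, pb_gX] at h
  omega

lemma eval_one (C₀ : ℤ) (h : 0 ≤ C₀) : χτ 0 C₀ (1 : FIM1) = 0 := by
  simp only [χτ, map_one]
  rw [if_neg]
  rintro ⟨-, -, hc⟩
  simp at hc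
  omega

-- ===== the relation words =====

def w1 (n : ℕ) : List Bool := List.replicate n true ++ (List.replicate (n+1) false ++ [true])
def w2 (n : ℕ) : List Bool := false :: (true :: (List.replicate n true ++ List.replicate n false))

lemma winv_rep (n : ℕ) :
    winv (FreeMonoid.ofList (List.replicate n true)) = FreeMonoid.ofList (List.replicate n false) := by
  simp [winv, FreeMonoid.toList_ofList, List.reverse_replicate, List.map_replicate]

lemma mk_w1_eq_w2 (n : ℕ) : mkF (FreeMonoid.ofList (w1 n)) = mkF (FreeMonoid.ofList (w2 n)) := by
  have hrel := FIMRel1.comm (FreeMonoid.ofList (List.replicate n true)) (FreeMonoid.of false)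
  have hcon : (conGen FIMRel1) _ _ := ConGen.Rel.of _ _ hrel
  have heq := (Con.eq (conGen FIMRel1)).mpr hcon
  have hofs : FreeMonoid.of false = FreeMonoid.ofList [false] := rfl
  have hoft : FreeMonoid.of true = FreeMonoid.ofList [true] := rfl
  have H1 : FreeMonoid.ofList (List.replicate n true) *
      winv (FreeMonoid.ofList (List.replicate n true)) *
      (FreeMonoid.of false * winv (FreeMonoid.of false)) = FreeMonoid.ofList (w1 n) := by
    rw [winv_rep, winv_of, Bool.not_false, hofs, hoft, ← FreeMonoid.ofList_append, ← FreeMonoid.ofList_append,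
      ← FreeMonoid.ofList_append]
    try congr 1
    try simp [w1, List.replicate_succ']
  have H2 : FreeMonoid.of false * winv (FreeMonoid.of false) *
      (FreeMonoid.ofList (List.replicate n true) *
        winv (FreeMonoid.ofList (List.replicate n true))) = FreeMonoid.ofList (w2 n) := by
    rw [winv_rep, winv_of, Bool.not_false, hofs, hoft, ← FreeMonoid.ofList_append, ← FreeMonoid.ofList_append,
      ← FreeMonoid.ofList_append]
    try congr 1
    try simp [w2]
  rw [← H1, ← H2]
  exact heq

-- ===== evaluation of the detector on the two words =====

lemma foxY_cons (χ : FIM1 → ℤ) (t : Bool) (w : List Bool) :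
    foxY χ (t :: w) = (if t then 0 else χ 1) + foxY (fun m => χ (mkF (FreeMonoid.of t) * m)) w := rfl

@[simp] lemma mkF_of_true : mkF (FreeMonoid.of true) = mx := rfl
@[simp] lemma mkF_of_false : mkF (FreeMonoid.of false) = my := rfl

lemma foxY_true_nil (χ : FIM1 → ℤ) : foxY χ [true] = 0 := by simp [foxY]
lemma foxY_nil (χ : FIM1 → ℤ) : foxY χ [] = 0 := rfl

lemma foxY_w1 (n : ℕ) (C₀ : ℤ) (hC : C₀ < n) : foxY (χτ 0 C₀) (w1 n) = 1 := by
  rw [w1, foxY_rep_true, foxY_rep_false, foxY_true_nil, add_zero]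
  simp only [eval1]
  have h : ∀ j ∈ Finset.range (n+1),
      (if (n:ℤ) = (j:ℤ) ∧ C₀ < (n:ℤ) then (1:ℤ) else 0) = if j = n then 1 else 0 := by
    intro j hj
    split_ifs <;> omega
  rw [Finset.sum_congr rfl h, Finset.sum_ite_eq']
  simp

lemma foxY_w2 (n : ℕ) (C₀ : ℤ) (h0 : 0 ≤ C₀) : foxY (χτ 0 C₀) (w2 n) = 0 := by
  rw [w2, foxY_cons, foxY_cons, mkF_of_true, mkF_of_false, foxY_rep_true,
    show List.replicate n false = List.replicate n false ++ [] from (List.append_nil _).symm,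
    foxY_rep_false, foxY_nil, add_zero, if_pos rfl, if_neg (Bool.false_ne_true),
    eval_one _ h0, zero_add, zero_add]
  simp only [eval2]
  simp


/-- The kernel of `d₁` is not finitely generated as a left `ℤM`-module. -/
theorem ker_d1_not_fg : ¬ (LinearMap.ker d1).FG := by
  rintro ⟨F, hF⟩
  classical
  set N : ℕ := F.sup (fun g => g.2.coeff.support.sup (fun m => (pc (φ m) - pa (φ m)).toNat)) with hNdef
  have hbound : ∀ g ∈ F, ∀ m ∈ g.2.coeff.support, pc (φ m) - pa (φ m) < (N:ℤ) + 1 := by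
    intro g hg m hm
    have h1 : (pc (φ m) - pa (φ m)).toNat ≤
        g.2.coeff.support.sup (fun m => (pc (φ m) - pa (φ m)).toNat) := Finset.le_sup (f := fun m : FIM1 => (pc (φ m) - pa (φ m)).toNat) hm
    have h2 : g.2.coeff.support.sup (fun m => (pc (φ m) - pa (φ m)).toNat) ≤ N :=
      Finset.le_sup (f := fun g : R × R => g.2.coeff.support.sup (fun m => (pc (φ m) - pa (φ m)).toNat)) hg
    have h3 := Int.self_le_toNat (pc (φ m) - pa (φ m))
    omega
  have hFker : ∀ g ∈ F, d1 g = 0 := by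
    intro g hg
    have hmem : g ∈ LinearMap.ker d1 := by rw [← hF]; exact Submodule.subset_span hg
    exact LinearMap.mem_ker.mp hmem
  have hk : fox (w1 (N+2)) - fox (w2 (N+2)) ∈ Submodule.span R (F : Set (R × R)) := by
    rw [hF, LinearMap.mem_ker, map_sub, d1_fox, d1_fox, mk_w1_eq_w2, sub_self]
  have hgood := span_vanish F hFker ((N:ℤ)+1) hbound _ hk
  have hτ := hgood.2 0 ((N:ℤ)+1) (by omega)
  have hsnd : (fox (w1 (N+2)) - fox (w2 (N+2))).2 = (fox (w1 (N+2))).2 - (fox (w2 (N+2))).2 := rfl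
  rw [hsnd, map_sub, E_fox, E_fox, foxY_w1 _ _ (by push_cast; omega),
    foxY_w2 _ _ (by omega)] at hτ
  norm_num at hτ
end

section
/- In M, for all natural numbers n, k with k > n ≥ 0, the equality xⁿyᵏx^{k+1} = x^{n+1}y^{k+1}x^{k+1} holds. -/
lemma winv_of_true : winv (FreeMonoid.of true) = FreeMonoid.of false := rfl

lemma winv_mul_of_false (w : FreeMonoid Bool) :
    winv (w * FreeMonoid.of false) = FreeMonoid.of true * winv w := by
  simp [winv, FreeMonoid.toList_mul]

lemma winv_pow_false (k : ℕ) :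
    winv ((FreeMonoid.of false) ^ k) = (FreeMonoid.of true) ^ k := by
  induction k with
  | zero => rfl
  | succ k ih =>
      rw [pow_succ, winv_mul_of_false, ih, ← pow_succ']

lemma mk'_pow (w : FreeMonoid Bool) (k : ℕ) :
    (conGen FIMRel1).mk' (w ^ k) = ((conGen FIMRel1).mk' w) ^ k := by
  exact map_pow _ w k

/-- `x * y * x = x` in the quotient. -/
lemma idem_q : mx * my * mx = mx := by
  have : (conGen FIMRel1) (FreeMonoid.of true * winv (FreeMonoid.of true) * FreeMonoid.of true)
      (FreeMonoid.of true) := ConGen.Rel.of _ _ (FIMRel1.idem _)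
  rw [winv_of_true] at this
  simpa [mx, my] using (Con.eq _).mpr this

/-- `(y^k x^k)(x y) = (x y)(y^k x^k)` in the quotient. -/
lemma comm_q (k : ℕ) :
    my ^ k * mx ^ k * (mx * my) = mx * my * (my ^ k * mx ^ k) := by
  have : (conGen FIMRel1)
      ((FreeMonoid.of false) ^ k * winv ((FreeMonoid.of false) ^ k) *
        (FreeMonoid.of true * winv (FreeMonoid.of true)))
      (FreeMonoid.of true * winv (FreeMonoid.of true) *
        ((FreeMonoid.of false) ^ k * winv ((FreeMonoid.of false) ^ k))) :=
    ConGen.Rel.of _ _ (FIMRel1.comm _ _)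
  rw [winv_of_true, winv_pow_false] at this
  have h := (Con.eq _).mpr this
  have hp : ∀ (w : FreeMonoid Bool) (k : ℕ), ((w ^ k : FreeMonoid Bool) : (conGen FIMRel1).Quotient)
      = (w : (conGen FIMRel1).Quotient) ^ k := fun w k => map_pow (conGen FIMRel1).mk' w k
  simpa [mx, my, map_mul, mk'_pow, hp] using h

/-- For `k > n ≥ 0`: `xⁿyᵏx^{k+1} = x^{n+1}y^{k+1}x^{k+1}` in `M`. -/
theorem rel_one (n k : ℕ) (h : n < k) :
    mx ^ n * my ^ k * mx ^ (k + 1) = mx ^ (n + 1) * my ^ (k + 1) * mx ^ (k + 1) := by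
  symm
  calc mx ^ (n + 1) * my ^ (k + 1) * mx ^ (k + 1)
      = mx ^ n * ((mx * my) * (my ^ k * mx ^ k)) * mx := by
        rw [pow_succ mx n, pow_succ' my k, pow_succ mx k]
        simp [mul_assoc]
    _ = mx ^ n * (my ^ k * mx ^ k * (mx * my)) * mx := by rw [comm_q]
    _ = mx ^ n * (my ^ k * mx ^ k) * (mx * my * mx) := by simp [mul_assoc]
    _ = mx ^ n * (my ^ k * mx ^ k) * mx := by rw [idem_q]
    _ = mx ^ n * my ^ k * mx ^ (k + 1) := by rw [pow_succ]; simp [mul_assoc]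
end

section
/- In M: (1) for all n, k with 0 < k ≤ n, the equality xⁿyᵏ·x = xⁿy^{k−1} holds; (2) for all n, k, j with 0 ≤ n < k and 0 < j ≤ k, the equality xⁿyᵏxʲ·y = xⁿyᵏx^{j−1} holds. -/
namespace FIMaux

abbrev q : FreeMonoid Bool →* FIM1 := (conGen FIMRel1).mk'

lemma winv_mul (u v : FreeMonoid Bool) : winv (u * v) = winv v * winv u := by
  simp [winv, FreeMonoid.toList_mul, List.reverse_append]

lemma winv_of (b : Bool) : winv (FreeMonoid.of b) = FreeMonoid.of (!b) := rfl

lemma winv_pow_of (b : Bool) (m : ℕ) :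
    winv ((FreeMonoid.of b) ^ m) = (FreeMonoid.of (!b)) ^ m := by
  induction m with
  | zero => rfl
  | succ k ih => rw [pow_succ, winv_mul, ih, winv_of, ← pow_succ']

lemma q_rel {u v : FreeMonoid Bool} (h : FIMRel1 u v) : q u = q v :=
  Con.eq _ |>.mpr (ConGen.Rel.of _ _ h)

lemma hidem (w : FreeMonoid Bool) : q w * q (winv w) * q w = q w := by
  have := q_rel (FIMRel1.idem w)
  simpa [map_mul] using this

lemma hcomm (w z : FreeMonoid Bool) :
    q w * q (winv w) * (q z * q (winv z)) = q z * q (winv z) * (q w * q (winv w)) := by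
  have := q_rel (FIMRel1.comm w z)
  simpa [map_mul] using this

lemma mx_pow (m : ℕ) : mx ^ m = q ((FreeMonoid.of true) ^ m) := by
  rw [map_pow]; rfl

lemma my_pow (m : ℕ) : my ^ m = q ((FreeMonoid.of false) ^ m) := by
  rw [map_pow]; rfl

lemma keyA : ∀ m : ℕ, 0 < m → mx ^ m * my ^ m * mx = mx ^ m * my ^ (m - 1) := by
  rintro m hm
  obtain ⟨k, rfl⟩ := Nat.exists_eq_add_of_lt hm
  simp only [Nat.zero_add, Nat.add_sub_cancel]
  have e1 : mx ^ k * my ^ k = q ((FreeMonoid.of true) ^ k) *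
      q (winv ((FreeMonoid.of true) ^ k)) := by
    rw [mx_pow, my_pow, winv_pow_of]; rfl
  have e2 : my * mx = q (FreeMonoid.of false) * q (winv (FreeMonoid.of false)) := rfl
  have hc := hcomm ((FreeMonoid.of true) ^ k) (FreeMonoid.of false)
  have hxyx : mx * my * mx = mx := hidem (FreeMonoid.of true)
  calc mx ^ (k + 1) * my ^ (k + 1) * mx
      = mx * ((mx ^ k * my ^ k) * (my * mx)) := by
        rw [pow_succ', pow_succ]; group
    _ = mx * ((my * mx) * (mx ^ k * my ^ k)) := by
        rw [e1, e2]; exact congrArg _ hc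
    _ = (mx * my * mx) * (mx ^ k * my ^ k) := by group
    _ = mx ^ (k + 1) * my ^ k := by rw [hxyx, pow_succ']; group

lemma keyB : ∀ m : ℕ, 0 < m → my ^ m * mx ^ m * my = my ^ m * mx ^ (m - 1) := by
  rintro m hm
  obtain ⟨k, rfl⟩ := Nat.exists_eq_add_of_lt hm
  simp only [Nat.zero_add, Nat.add_sub_cancel]
  have e1 : my ^ k * mx ^ k = q ((FreeMonoid.of false) ^ k) *
      q (winv ((FreeMonoid.of false) ^ k)) := by
    rw [mx_pow, my_pow, winv_pow_of]; rfl
  have e2 : mx * my = q (FreeMonoid.of true) * q (winv (FreeMonoid.of true)) := rfl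
  have hc := hcomm ((FreeMonoid.of false) ^ k) (FreeMonoid.of true)
  have hyxy : my * mx * my = my := hidem (FreeMonoid.of false)
  calc my ^ (k + 1) * mx ^ (k + 1) * my
      = my * ((my ^ k * mx ^ k) * (mx * my)) := by
        rw [pow_succ', pow_succ]; group
    _ = my * ((mx * my) * (my ^ k * mx ^ k)) := by
        rw [e1, e2]; exact congrArg _ hc
    _ = (my * mx * my) * (my ^ k * mx ^ k) := by group
    _ = my ^ (k + 1) * mx ^ k := by rw [hyxy, pow_succ']; group

end FIMaux

/-- (1) For `0 < k ≤ n`: `xⁿyᵏ·x = xⁿy^{k−1}`;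
(2) for `0 ≤ n < k` and `0 < j ≤ k`: `xⁿyᵏxʲ·y = xⁿyᵏx^{j−1}`. -/
theorem strong_edges_mul :
    (∀ n k : ℕ, 0 < k → k ≤ n → mx ^ n * my ^ k * mx = mx ^ n * my ^ (k - 1)) ∧
    (∀ n k j : ℕ, n < k → 0 < j → j ≤ k →
      mx ^ n * my ^ k * mx ^ j * my = mx ^ n * my ^ k * mx ^ (j - 1)) := by
  constructor
  · intro n k hk hkn
    obtain ⟨d, rfl⟩ := Nat.exists_eq_add_of_le hkn
    rw [add_comm k d, pow_add, mul_assoc, mul_assoc, ← mul_assoc (mx ^ k),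
      FIMaux.keyA k hk, ← mul_assoc]
  · intro n k j hnk hj hjk
    obtain ⟨d, rfl⟩ := Nat.exists_eq_add_of_le hjk
    have h : my ^ (j + d) * mx ^ j * my = my ^ (j + d) * mx ^ (j - 1) := by
      rw [add_comm j d, pow_add, mul_assoc, mul_assoc, ← mul_assoc (my ^ j),
        FIMaux.keyB j hj, ← mul_assoc]
    rw [mul_assoc, mul_assoc, ← mul_assoc (my ^ (j+d)), h, mul_assoc]
end

section
/- The family consisting of all c₁(n,k) with 0 < k ≤ n, all c₂(n,k,j) with 0 ≤ n < k and 0 < j ≤ k, and all β(n,k) with 0 ≤ n < k is a ℤ-basis of the kernel of d₁: these elements are ℤ-linearly independent and their ℤ-span equals ker d₁. -/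
/-- `m·e_x := (m, 0)` in `R × R`. -/
noncomputable def ex (r : R) : R × R := (r, 0)

/-- `m·e_y := (0, m)` in `R × R`. -/
noncomputable def ey (r : R) : R × R := (0, r)

/-- `c₁(n,k) := xⁿy^{k−1}·e_y + xⁿyᵏ·e_x` (for `0 < k ≤ n`). -/
noncomputable def c1 (n k : ℕ) : R × R :=
  ey (Xg ^ n * Yg ^ (k - 1)) + ex (Xg ^ n * Yg ^ k)

/-- `c₂(n,k,j) := xⁿyᵏx^{j−1}·e_x + xⁿyᵏxʲ·e_y` (for `0 ≤ n < k`, `0 < j ≤ k`). -/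
noncomputable def c2 (n k j : ℕ) : R × R :=
  ex (Xg ^ n * Yg ^ k * Xg ^ (j - 1)) + ey (Xg ^ n * Yg ^ k * Xg ^ j)

/-- `β(n,k) := Σ_{i<k} xⁿyⁱ·e_y + Σ_{j<k} xⁿyᵏxʲ·e_x + xⁿyᵏxᵏ·e_x − xⁿ·e_x
  − Σ_{i≤k} x^{n+1}yⁱ·e_y − Σ_{j≤k} x^{n+1}y^{k+1}xʲ·e_x` (for `0 ≤ n < k`). -/
noncomputable def beta (n k : ℕ) : R × R :=
  (∑ i ∈ Finset.range k, ey (Xg ^ n * Yg ^ i)) +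
  (∑ j ∈ Finset.range k, ex (Xg ^ n * Yg ^ k * Xg ^ j)) +
  ex (Xg ^ n * Yg ^ k * Xg ^ k) - ex (Xg ^ n) -
  (∑ i ∈ Finset.range (k + 1), ey (Xg ^ (n + 1) * Yg ^ i)) -
  (∑ j ∈ Finset.range (k + 1), ex (Xg ^ (n + 1) * Yg ^ (k + 1) * Xg ^ j))

/-- The index set for the family of cycles. -/
def Idx : Type :=
  {p : ℕ × ℕ // 0 < p.2 ∧ p.2 ≤ p.1} ⊕
  {t : ℕ × ℕ × ℕ // t.1 < t.2.1 ∧ 0 < t.2.2 ∧ t.2.2 ≤ t.2.1} ⊕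
  {p : ℕ × ℕ // p.1 < p.2}

/-- The family of all `c₁(n,k)` with `0 < k ≤ n`, `c₂(n,k,j)` with `0 ≤ n < k`,
`0 < j ≤ k`, and `β(n,k)` with `0 ≤ n < k`. -/
noncomputable def fam : Idx → R × R
  | .inl ⟨(n, k), _⟩ => c1 n k
  | .inr (.inl ⟨(n, k, j), _⟩) => c2 n k j
  | .inr (.inr ⟨(n, k), _⟩) => beta n k

namespace FIMwork

@[simp] lemma winv_mul (w z : FreeMonoid Bool) : winv (w * z) = winv z * winv w := by
  simp [winv, FreeMonoid.toList_mul, List.reverse_append, ← FreeMonoid.ofList_append]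

@[simp] lemma winv_of (b : Bool) : winv (FreeMonoid.of b) = FreeMonoid.of (!b) := rfl

@[simp] lemma winv_one : winv (1 : FreeMonoid Bool) = 1 := rfl

lemma winv_pow_of (b : Bool) (n : ℕ) :
    winv ((FreeMonoid.of b) ^ n) = (FreeMonoid.of (!b)) ^ n := by
  induction n with
  | zero => simp
  | succ n ih => rw [pow_succ, winv_mul, ih, winv_of, pow_succ']

def mkq : FreeMonoid Bool →* FIM1 := (conGen FIMRel1).mk'

lemma rel_idem (w : FreeMonoid Bool) : mkq (w * winv w * w) = mkq w := by
  exact ((conGen FIMRel1).eq).2 (ConGen.Rel.of _ _ (FIMRel1.idem w))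

lemma rel_comm (w z : FreeMonoid Bool) :
    mkq (w * winv w * (z * winv z)) = mkq (z * winv z * (w * winv w)) := by
  exact ((conGen FIMRel1).eq).2 (ConGen.Rel.of _ _ (FIMRel1.comm w z))

lemma mx_pow (n : ℕ) : mx ^ n = mkq ((FreeMonoid.of true) ^ n) := by
  rw [map_pow]; rfl

lemma my_pow (n : ℕ) : my ^ n = mkq ((FreeMonoid.of false) ^ n) := by
  rw [map_pow]; rfl

/-- idempotent commutation: (y^c x^c) (x y) = (x y)(y^c x^c) -/
lemma comm_yx_xy (c : ℕ) :
    my ^ c * mx ^ c * (mx * my) = mx * my * (my ^ c * mx ^ c) := by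
  have h := rel_comm ((FreeMonoid.of false) ^ c) (FreeMonoid.of true)
  simp only [winv_pow_of, winv_of, Bool.not_false, Bool.not_true, map_mul] at h
  rw [mx_pow, my_pow]; simpa [mx, my, mkq, mul_assoc] using h

/-- idempotent commutation: (x^c y^c) (y x) = (y x)(x^c y^c) -/
lemma comm_xy_yx (c : ℕ) :
    mx ^ c * my ^ c * (my * mx) = my * mx * (mx ^ c * my ^ c) := by
  have h := rel_comm ((FreeMonoid.of true) ^ c) (FreeMonoid.of false)
  simp only [winv_pow_of, winv_of, Bool.not_false, Bool.not_true, map_mul] at h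
  rw [mx_pow, my_pow]; simpa [mx, my, mkq, mul_assoc] using h

@[simp] lemma yxy : my * mx * my = my := by
  have h := rel_idem (FreeMonoid.of false)
  simpa [mkq, my, mx, map_mul] using h

@[simp] lemma xyx : mx * my * mx = mx := by
  have h := rel_idem (FreeMonoid.of true)
  simpa [mkq, my, mx, map_mul] using h

end FIMwork
namespace FIMwork

lemma W1 (c : ℕ) : my ^ (c+1) * mx ^ (c+1) * my = my ^ (c+1) * mx ^ c := by
  calc my ^ (c+1) * mx ^ (c+1) * my
      = my * (my ^ c * mx ^ c * (mx * my)) := by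
        rw [pow_succ' my c, pow_succ mx c]; simp only [mul_assoc]
    _ = my * (mx * my * (my ^ c * mx ^ c)) := by rw [comm_yx_xy]
    _ = my * mx * my * (my ^ c * mx ^ c) := by simp only [mul_assoc]
    _ = my * (my ^ c * mx ^ c) := by rw [yxy]
    _ = my ^ (c+1) * mx ^ c := by rw [pow_succ' my c]; simp only [mul_assoc]

lemma W2 (c : ℕ) : mx ^ (c+1) * my ^ (c+1) * mx = mx ^ (c+1) * my ^ c := by
  calc mx ^ (c+1) * my ^ (c+1) * mx
      = mx * (mx ^ c * my ^ c * (my * mx)) := by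
        rw [pow_succ' mx c, pow_succ my c]; simp only [mul_assoc]
    _ = mx * (my * mx * (mx ^ c * my ^ c)) := by rw [comm_xy_yx]
    _ = mx * my * mx * (mx ^ c * my ^ c) := by simp only [mul_assoc]
    _ = mx * (mx ^ c * my ^ c) := by rw [xyx]
    _ = mx ^ (c+1) * my ^ c := by rw [pow_succ' mx c]; simp only [mul_assoc]

lemma W3 (b : ℕ) : mx * my ^ (b+1) * mx ^ (b+1) = my ^ b * mx ^ (b+1) := by
  calc mx * my ^ (b+1) * mx ^ (b+1)
      = mx * my * (my ^ b * mx ^ b) * mx := by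
        rw [pow_succ' my b, pow_succ mx b]; simp only [mul_assoc]
    _ = my ^ b * mx ^ b * (mx * my) * mx := by rw [← comm_yx_xy]
    _ = my ^ b * mx ^ b * (mx * my * mx) := by simp only [mul_assoc]
    _ = my ^ b * mx ^ b * mx := by rw [xyx]
    _ = my ^ b * mx ^ (b + 1) := by rw [pow_succ mx b]; simp only [mul_assoc]

lemma W4 {j k : ℕ} (h : j + 1 ≤ k) : my ^ k * mx ^ (j+1) * my = my ^ k * mx ^ j := by
  obtain ⟨d, rfl⟩ : ∃ d, k = d + (j+1) := ⟨k - (j+1), by omega⟩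
  rw [pow_add]
  calc my ^ d * my ^ (j+1) * mx ^ (j+1) * my
      = my ^ d * (my ^ (j+1) * mx ^ (j+1) * my) := by simp only [mul_assoc]
    _ = my ^ d * (my ^ (j+1) * mx ^ j) := by rw [W1]
    _ = my ^ d * my ^ (j+1) * mx ^ j := by simp only [mul_assoc]

lemma W5 {k n : ℕ} (h : k + 1 ≤ n) : mx ^ n * my ^ (k+1) * mx = mx ^ n * my ^ k := by
  obtain ⟨d, rfl⟩ : ∃ d, n = d + (k+1) := ⟨n - (k+1), by omega⟩
  rw [pow_add]
  calc mx ^ d * mx ^ (k+1) * my ^ (k+1) * mx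
      = mx ^ d * (mx ^ (k+1) * my ^ (k+1) * mx) := by simp only [mul_assoc]
    _ = mx ^ d * (mx ^ (k+1) * my ^ k) := by rw [W2]
    _ = mx ^ d * mx ^ (k+1) * my ^ k := by simp only [mul_assoc]

def OK (v : ℕ × ℕ × ℕ) : Prop := v.1 ≤ v.2.1 ∧ v.2.2 ≤ v.2.1

lemma OK_mk {a b c : ℕ} (h1 : a ≤ b) (h2 : c ≤ b) : OK (a,b,c) := ⟨h1, h2⟩

lemma OK_elim {a b c : ℕ} (h : OK (a,b,c)) : a ≤ b ∧ c ≤ b := h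

def Nt (v : ℕ × ℕ × ℕ) : FIM1 := mx ^ v.1 * my ^ v.2.1 * mx ^ v.2.2

lemma Nt_def (a b c : ℕ) : Nt (a,b,c) = mx ^ a * my ^ b * mx ^ c := rfl

lemma Nt_mul_x_lt {a b c : ℕ} (h : c < b) : Nt (a,b,c) * mx = Nt (a,b,c+1) := by
  simp only [Nt_def, pow_succ, mul_assoc]

lemma Nt_mul_x_eq (a b : ℕ) : Nt (a,b,b) * mx = Nt (a+1,b+1,b+1) := by
  calc Nt (a,b,b) * mx = mx ^ a * (my ^ b * mx ^ (b+1)) := by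
        simp only [Nt_def, pow_succ, mul_assoc]
    _ = mx ^ a * (mx * my ^ (b+1) * mx ^ (b+1)) := by rw [W3]
    _ = Nt (a+1,b+1,b+1) := by
        rw [Nt_def, pow_succ mx a]; simp only [mul_assoc]

lemma Nt_mul_y_pos {a b c : ℕ} (h1 : 1 ≤ c) (h2 : c ≤ b) :
    Nt (a,b,c) * my = Nt (a,b,c-1) := by
  obtain ⟨j, rfl⟩ : ∃ j, c = j + 1 := ⟨c - 1, by omega⟩
  calc Nt (a,b,j+1) * my = mx ^ a * (my ^ b * mx ^ (j+1) * my) := by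
        simp only [Nt_def, mul_assoc]
    _ = mx ^ a * (my ^ b * mx ^ j) := by rw [W4 h2]
    _ = Nt (a,b,j+1-1) := by simp only [Nt_def, mul_assoc, Nat.add_sub_cancel]

lemma Nt_mul_y_zero (a b : ℕ) : Nt (a,b,0) * my = Nt (a,b+1,0) := by
  simp only [Nt_def, pow_zero, mul_one, pow_succ, mul_assoc]

lemma NF_aux {n : ℕ} : ∀ m, m ≤ n → mx ^ n * my ^ n * mx ^ m = mx ^ n * my ^ (n - m)
  | 0, _ => by simp
  | (m+1), h => by
    have ih := NF_aux (n := n) m (by omega)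
    obtain ⟨e, he⟩ : ∃ e, n - m = e + 1 := ⟨n - m - 1, by omega⟩
    have hW := W5 (k := e) (n := n) (by omega)
    have he2 : e = n - (m+1) := by omega
    calc mx ^ n * my ^ n * mx ^ (m+1)
        = mx ^ n * my ^ n * mx ^ m * mx := by rw [pow_succ]; simp only [mul_assoc]
      _ = mx ^ n * my ^ (e+1) * mx := by rw [ih, he]
      _ = mx ^ n * my ^ e := hW
      _ = mx ^ n * my ^ (n - (m+1)) := by rw [he2]

lemma NF_xy {n j : ℕ} (h : j ≤ n) : mx ^ n * my ^ j = Nt (n,n,n-j) := by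
  have h2 := NF_aux (n := n) (n - j) (by omega)
  have h3 : n - (n - j) = j := by omega
  rw [Nt_def, h2, h3]

lemma x_mul_Nt (a b c : ℕ) : mx * Nt (a,b,c) = Nt (a+1,b,c) := by
  simp only [Nt_def, pow_succ' mx a, mul_assoc]

lemma x_mul_Nt_eq {a c : ℕ} (h : c ≤ a) : mx * Nt (a,a,c) = Nt (a+1,a+1,c+1) := by
  calc mx * Nt (a,a,c) = mx ^ (a+1) * my ^ a * mx ^ c := by
        simp only [Nt_def, pow_succ' mx a, mul_assoc]
    _ = Nt (a+1,a+1,a+1-a) * mx ^ c := by rw [NF_xy (by omega)]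
    _ = mx ^ (a+1) * my ^ (a+1) * (mx * mx ^ c) := by
        have : a + 1 - a = 1 := by omega
        simp only [Nt_def, this, pow_one, mul_assoc]
    _ = Nt (a+1,a+1,c+1) := by simp only [Nt_def, pow_succ' mx c, mul_assoc]

lemma y_mul_Nt_pos {a b c : ℕ} (h1 : 1 ≤ a) (h2 : a ≤ b) :
    my * Nt (a,b,c) = Nt (a-1,b,c) := by
  obtain ⟨e, rfl⟩ : ∃ e, a = e + 1 := ⟨a - 1, by omega⟩
  obtain ⟨d, rfl⟩ : ∃ d, b = (e+1) + d := ⟨b - (e+1), by omega⟩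
  have key : my * mx ^ (e+1) * my ^ (e+1) = mx ^ e * my ^ (e+1) := by
    calc my * mx ^ (e+1) * my ^ (e+1)
        = my * mx * (mx ^ e * my ^ e * my) := by
          rw [pow_succ' mx e, pow_succ my e]; simp only [mul_assoc]
      _ = my * mx * (mx ^ e * my ^ e) * my := by simp only [mul_assoc]
      _ = mx ^ e * my ^ e * (my * mx) * my := by rw [← comm_xy_yx]
      _ = mx ^ e * my ^ e * (my * mx * my) := by simp only [mul_assoc]
      _ = mx ^ e * my ^ e * my := by rw [yxy]
      _ = mx ^ e * my ^ (e+1) := by rw [pow_succ my e, ← mul_assoc]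
  calc my * Nt (e+1, e+1+d, c)
      = my * mx ^ (e+1) * my ^ (e+1) * (my ^ d * mx ^ c) := by
        simp only [Nt_def, pow_add, mul_assoc]
    _ = mx ^ e * my ^ (e+1) * (my ^ d * mx ^ c) := by rw [key]
    _ = Nt (e+1-1, e+1+d, c) := by
        simp only [Nt_def, pow_add, mul_assoc, Nat.add_sub_cancel]

lemma y_mul_Nt_zero (b c : ℕ) : my * Nt (0,b,c) = Nt (0,b+1,c) := by
  simp only [Nt_def, pow_zero, one_mul, pow_succ' my b, mul_assoc]

lemma Nt_surj (g : FIM1) : ∃ v, OK v ∧ Nt v = g := by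
  induction g using Con.induction_on with
  | H w =>
    induction w using FreeMonoid.recOn with
    | one =>
      refine ⟨(0,0,0), OK_mk le_rfl le_rfl, ?_⟩
      show mx ^ 0 * my ^ 0 * mx ^ 0 = _
      simp
    | of_mul b w ih =>
      obtain ⟨⟨a, b', c⟩, hOK, hv⟩ := ih
      obtain ⟨hab, hcb⟩ : a ≤ b' ∧ c ≤ b' := hOK
      have hw : (↑(FreeMonoid.of b * w) : FIM1) = (if b then mx else my) * ↑w := by
        cases b <;> simp [mx, my, mkq, Con.coe_mk', ← Con.coe_mul]
      rw [hw, ← hv]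
      cases b with
      | true =>
        by_cases hab' : a < b'
        · exact ⟨(a+1,b',c), OK_mk (by omega) (by omega), by simp [x_mul_Nt]⟩
        · have : a = b' := by omega
          subst this
          exact ⟨(a+1,a+1,c+1), OK_mk (by omega) (by omega), by simp [x_mul_Nt_eq hcb]⟩
      | false =>
        by_cases ha : 1 ≤ a
        · exact ⟨(a-1,b',c), OK_mk (by omega) (by omega), by simp [y_mul_Nt_pos ha hab]⟩
        · have : a = 0 := by omega
          subst this
          exact ⟨(0,b'+1,c), OK_mk (by omega) (by omega), by simp [y_mul_Nt_zero]⟩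

end FIMwork
namespace FIMwork

structure Trip where
  A : ℤ
  B : ℤ
  t : ℤ
  hA : 0 ≤ A
  hB : 0 ≤ B
  h1 : -A ≤ t
  h2 : t ≤ B

lemma Trip.ext' {u v : Trip} (h1 : u.A = v.A) (h2 : u.B = v.B) (h3 : u.t = v.t) : u = v := by
  cases u; cases v
  dsimp at h1 h2 h3
  subst h1; subst h2; subst h3
  rfl

def tmul (u v : Trip) : Trip where
  A := max u.A (v.A - u.t)
  B := max u.B (v.B + u.t)
  t := u.t + v.t
  hA := by have := u.hA; have := v.hA; omega
  hB := by have := u.hB; have := v.hB; omega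
  h1 := by have := u.hA; have := v.h1; omega
  h2 := by have := u.hB; have := v.h2; omega

instance : Mul Trip := ⟨tmul⟩
instance : One Trip := ⟨⟨0, 0, 0, le_rfl, le_rfl, by norm_num, le_rfl⟩⟩

@[simp] lemma mul_A (u v : Trip) : (u * v).A = max u.A (v.A - u.t) := rfl
@[simp] lemma mul_B (u v : Trip) : (u * v).B = max u.B (v.B + u.t) := rfl
@[simp] lemma mul_t (u v : Trip) : (u * v).t = u.t + v.t := rfl
@[simp] lemma one_A : (1 : Trip).A = 0 := rfl
@[simp] lemma one_B : (1 : Trip).B = 0 := rfl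
@[simp] lemma one_t : (1 : Trip).t = 0 := rfl

instance : Monoid Trip where
  mul_assoc u v w := by
    apply Trip.ext' <;> simp only [mul_A, mul_B, mul_t] <;> omega
  one_mul u := by
    have h1 := u.hA; have h2 := u.hB
    apply Trip.ext' <;> simp only [mul_A, mul_B, mul_t, one_A, one_B, one_t] <;> omega
  mul_one u := by
    have h1 := u.h1; have h2 := u.h2
    apply Trip.ext' <;> simp only [mul_A, mul_B, mul_t, one_A, one_B, one_t] <;> omega

def xT : Trip := ⟨0, 1, 1, le_rfl, by norm_num, by norm_num, le_rfl⟩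
def yT : Trip := ⟨1, 0, -1, by norm_num, le_rfl, by norm_num, by norm_num⟩

def star (u : Trip) : Trip where
  A := u.A + u.t
  B := u.B - u.t
  t := -u.t
  hA := by have := u.h1; omega
  hB := by have := u.h2; omega
  h1 := by have := u.hA; omega
  h2 := by have := u.hB; omega

lemma star_mul (u v : Trip) : star (u * v) = star v * star u := by
  apply Trip.ext' <;> simp only [star, mul_A, mul_B, mul_t] <;> omega

noncomputable def fT : FreeMonoid Bool →* Trip :=
  FreeMonoid.lift (fun b => if b then xT else yT)

@[simp] lemma fT_of (b : Bool) : fT (FreeMonoid.of b) = if b then xT else yT := by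
  simp [fT]

lemma star_fT_of (b : Bool) : fT (FreeMonoid.of (!b)) = star (fT (FreeMonoid.of b)) := by
  cases b <;> simp <;> apply Trip.ext' <;> simp [star, xT, yT]

lemma fT_winv (w : FreeMonoid Bool) : fT (winv w) = star (fT w) := by
  induction w using FreeMonoid.recOn with
  | one =>
    simp only [winv_one, map_one]
    apply Trip.ext' <;> simp [star]
  | of_mul b w ih =>
    rw [winv_mul, map_mul, map_mul, ih, winv_of, star_fT_of, ← star_mul]

lemma trip_idem (u : Trip) : u * star u * u = u := by
  have h1 := u.h1; have h2 := u.h2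
  apply Trip.ext' <;> simp only [star, mul_A, mul_B, mul_t] <;> omega

lemma trip_comm (u v : Trip) :
    u * star u * (v * star v) = v * star v * (u * star u) := by
  apply Trip.ext' <;> simp only [star, mul_A, mul_B, mul_t] <;> omega

lemma hle : conGen FIMRel1 ≤ Con.ker fT := by
  apply Con.conGen_le.2
  intro x y h
  cases h with
  | idem w =>
    simpa only [Con.ker_rel, map_mul, fT_winv] using trip_idem (fT _)
  | comm w z =>
    simpa only [Con.ker_rel, map_mul, fT_winv] using trip_comm (fT _) (fT _)

noncomputable def phi : FIM1 →* Trip := Con.lift _ fT hle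

lemma phi_mkq (w : FreeMonoid Bool) : phi (mkq w) = fT w := Con.lift_mk' hle w

lemma phi_mx : phi mx = xT := by
  have := phi_mkq (FreeMonoid.of true)
  simpa [mkq, mx] using this

lemma phi_my : phi my = yT := by
  have := phi_mkq (FreeMonoid.of false)
  simpa [mkq, my] using this

lemma xT_pow (n : ℕ) : xT ^ n = ⟨(0:ℤ), n, n, le_rfl, Int.ofNat_nonneg n, by omega, le_rfl⟩ := by
  induction n with
  | zero => apply Trip.ext' <;> simp
  | succ n ih =>
    rw [pow_succ, ih]
    apply Trip.ext' <;> simp [xT] <;> push_cast <;> omega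

lemma yT_pow (n : ℕ) : yT ^ n = ⟨(n:ℤ), 0, -n, Int.ofNat_nonneg n, le_rfl, by omega, by omega⟩ := by
  induction n with
  | zero => apply Trip.ext' <;> simp
  | succ n ih =>
    rw [pow_succ, ih]
    apply Trip.ext' <;> simp [yT] <;> push_cast <;> omega

lemma phi_Nt {a b c : ℕ} (h1 : a ≤ b) (h2 : c ≤ b) :
    phi (Nt (a,b,c)) = ⟨(b:ℤ) - a, a, (a:ℤ) - b + c, by omega, by omega, by omega, by omega⟩ := by
  show phi (mx ^ a * my ^ b * mx ^ c) = _
  rw [map_mul, map_mul, map_pow, map_pow, map_pow, phi_mx, phi_my, xT_pow, yT_pow, xT_pow]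
  apply Trip.ext' <;> simp only [mul_A, mul_B, mul_t] <;> omega

lemma Nt_inj {v w : ℕ × ℕ × ℕ} (hv : OK v) (hw : OK w) (h : Nt v = Nt w) : v = w := by
  obtain ⟨a, b, c⟩ := v
  obtain ⟨a', b', c'⟩ := w
  obtain ⟨h1, h2⟩ : a ≤ b ∧ c ≤ b := hv
  obtain ⟨h3, h4⟩ : a' ≤ b' ∧ c' ≤ b' := hw
  have := congrArg phi h
  rw [phi_Nt h1 h2, phi_Nt h3 h4] at this
  have eA := congrArg Trip.A this
  have eB := congrArg Trip.B this
  have et := congrArg Trip.t this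
  dsimp at eA eB et
  have : a = a' ∧ b = b' ∧ c = c' := by omega
  simp [this.1, this.2.1, this.2.2]

end FIMwork
namespace FIMwork

attribute [local instance] Classical.propDecidable

noncomputable def dec (g : FIM1) : ℕ × ℕ × ℕ := Classical.choose (Nt_surj g)

lemma dec_spec (g : FIM1) : OK (dec g) ∧ Nt (dec g) = g := Classical.choose_spec (Nt_surj g)

lemma dec_Nt {v : ℕ × ℕ × ℕ} (h : OK v) : dec (Nt v) = v :=
  Nt_inj (dec_spec (Nt v)).1 h (dec_spec (Nt v)).2

noncomputable def sg (v : ℕ × ℕ × ℕ) : R := MonoidAlgebra.single (Nt v) 1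

lemma rep3 (n k j : ℕ) : Xg ^ n * Yg ^ k * Xg ^ j = sg (n,k,j) := by
  rw [sg, Nt_def, Xg, Yg, ← map_pow, ← map_pow, ← map_pow, ← map_mul, ← map_mul,
    MonoidAlgebra.of_apply]

lemma rep2 (n k : ℕ) : Xg ^ n * Yg ^ k = sg (n,k,0) := by
  have := rep3 n k 0
  simpa using this

lemma sg_low {n j : ℕ} (h : j ≤ n) : sg (n,j,0) = sg (n,n,n-j) := by
  rw [sg, sg]
  congr 1
  rw [← NF_xy h, Nt_def, pow_zero, mul_one]

lemma rep1 (n : ℕ) : Xg ^ n = sg (n,n,n) := by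
  have h := rep2 n 0
  rw [pow_zero, mul_one] at h
  rw [h, sg_low (Nat.zero_le n), Nat.sub_zero]

def nf (n i : ℕ) : ℕ × ℕ × ℕ := if i ≤ n then (n,n,n-i) else (n,i,0)

lemma nf_OK (n i : ℕ) : OK (nf n i) := by
  rw [nf]; split <;> exact OK_mk (by omega) (by omega)

lemma rep_nf (n i : ℕ) : Xg ^ n * Yg ^ i = sg (nf n i) := by
  rw [rep2, nf]
  split
  · exact sg_low (by omega)
  · rfl

lemma sg_apply {v w : ℕ × ℕ × ℕ} (hv : OK v) (hw : OK w) :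
    (sg v).coeff (Nt w) = if v = w then (1:ℤ) else 0 := by
  rw [sg, MonoidAlgebra.single_apply]
  by_cases h : v = w
  · rw [if_pos (by rw [h]), if_pos h]
  · rw [if_neg (fun hh => h (Nt_inj hv hw hh)), if_neg h]

lemma c1_fst {n k : ℕ} (h1 : 1 ≤ k) (h2 : k ≤ n) : (c1 n k).1 = sg (n,n,n-k) := by
  show (0 : R) + Xg ^ n * Yg ^ k = _
  rw [zero_add, rep2, sg_low (n := n) (j := k) (by omega)]

lemma c1_snd {n k : ℕ} (h1 : 1 ≤ k) (h2 : k ≤ n) : (c1 n k).2 = sg (n,n,n-k+1) := by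
  show Xg ^ n * Yg ^ (k-1) + (0 : R) = _
  rw [add_zero, rep2, sg_low (n := n) (j := k-1) (by omega)]
  have h3 : n - (k-1) = n-k+1 := by omega
  rw [h3]

lemma c2_fst {n k j : ℕ} : (c2 n k j).1 = sg (n,k,j-1) := by
  show Xg ^ n * Yg ^ k * Xg ^ (j-1) + (0 : R) = _
  rw [add_zero, rep3]

lemma c2_snd {n k j : ℕ} : (c2 n k j).2 = sg (n,k,j) := by
  show (0 : R) + Xg ^ n * Yg ^ k * Xg ^ j = _
  rw [zero_add, rep3]

lemma beta_fst (n k : ℕ) : (beta n k).1 =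
    (∑ j ∈ Finset.range k, sg (n,k,j)) + sg (n,k,k) - sg (n,n,n)
      - ∑ j ∈ Finset.range (k+1), sg (n+1,k+1,j) := by
  rw [beta]
  simp only [ex, ey, Prod.fst_sub, Prod.fst_add, Prod.fst_sum, Finset.sum_const_zero,
    zero_add, add_zero, sub_zero]
  rw [Finset.sum_congr rfl (fun j _ => rep3 n k j),
    Finset.sum_congr rfl (fun j _ => rep3 (n+1) (k+1) j), rep3, rep1]

lemma beta_snd (n k : ℕ) : (beta n k).2 =
    (∑ i ∈ Finset.range k, sg (nf n i)) - ∑ i ∈ Finset.range (k+1), sg (nf (n+1) i) := by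
  rw [beta]
  simp only [ex, ey, Prod.snd_sub, Prod.snd_add, Prod.snd_sum, Finset.sum_const_zero,
    zero_add, add_zero, sub_zero]
  rw [Finset.sum_congr rfl (fun i _ => rep_nf n i),
    Finset.sum_congr rfl (fun i _ => rep_nf (n+1) i)]

end FIMwork
namespace FIMwork

attribute [local instance] Classical.propDecidable

lemma c1_fst_apply {n k : ℕ} (h1 : 1 ≤ k) (h2 : k ≤ n) {w : ℕ×ℕ×ℕ} (hw : OK w) :
    (c1 n k).1.coeff (Nt w) = if ((n,n,n-k) : ℕ×ℕ×ℕ) = w then (1:ℤ) else 0 := by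
  rw [c1_fst h1 h2, sg_apply (OK_mk (by omega) (by omega)) hw]

lemma c1_snd_apply {n k : ℕ} (h1 : 1 ≤ k) (h2 : k ≤ n) {w : ℕ×ℕ×ℕ} (hw : OK w) :
    (c1 n k).2.coeff (Nt w) = if ((n,n,n-k+1) : ℕ×ℕ×ℕ) = w then (1:ℤ) else 0 := by
  rw [c1_snd h1 h2, sg_apply (OK_mk (by omega) (by omega)) hw]

lemma c2_fst_apply {n k j : ℕ} (hnk : n ≤ k) (hj : j ≤ k) {w : ℕ×ℕ×ℕ} (hw : OK w) :
    (c2 n k j).1.coeff (Nt w) = if ((n,k,j-1) : ℕ×ℕ×ℕ) = w then (1:ℤ) else 0 := by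
  rw [c2_fst, sg_apply (OK_mk (by omega) (by omega)) hw]

lemma c2_snd_apply {n k j : ℕ} (hnk : n ≤ k) (hj : j ≤ k) {w : ℕ×ℕ×ℕ} (hw : OK w) :
    (c2 n k j).2.coeff (Nt w) = if ((n,k,j) : ℕ×ℕ×ℕ) = w then (1:ℤ) else 0 := by
  rw [c2_snd, sg_apply (OK_mk (by omega) (by omega)) hw]

lemma beta_fst_X {n k : ℕ} (hnk : n < k) {a b : ℕ} (hab : a < b) :
    (beta n k).1.coeff (Nt (a,b,b)) = if n = a ∧ k = b then (1:ℤ) else 0 := by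
  have hw : OK (a,b,b) := OK_mk (by omega) le_rfl
  rw [beta_fst, MonoidAlgebra.coeff_sub, Finsupp.sub_apply, MonoidAlgebra.coeff_sub, Finsupp.sub_apply, MonoidAlgebra.coeff_add, Finsupp.add_apply,
    MonoidAlgebra.coeff_sum, Finsupp.finset_sum_apply, MonoidAlgebra.coeff_sum, Finsupp.finset_sum_apply]
  have z1 : ∀ j ∈ Finset.range k, (sg (n,k,j)).coeff (Nt (a,b,b)) = 0 := by
    intro j hj
    have hjk := Finset.mem_range.mp hj
    have hne : ((n,k,j) : ℕ×ℕ×ℕ) ≠ (a,b,b) := by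
      simp only [ne_eq, Prod.mk.injEq, not_and]; intros; omega
    rw [sg_apply (OK_mk (by omega) (by omega)) hw, if_neg hne]
  have z2 : ∀ j ∈ Finset.range (k+1), (sg (n+1,k+1,j)).coeff (Nt (a,b,b)) = 0 := by
    intro j hj
    have hjk := Finset.mem_range.mp hj
    have hne : ((n+1,k+1,j) : ℕ×ℕ×ℕ) ≠ (a,b,b) := by
      simp only [ne_eq, Prod.mk.injEq, not_and]; intros; omega
    rw [sg_apply (OK_mk (by omega) (by omega)) hw, if_neg hne]
  rw [Finset.sum_eq_zero z1, Finset.sum_eq_zero z2,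
    sg_apply (OK_mk (by omega) (le_refl k)) hw,
    sg_apply (OK_mk (le_refl n) (le_refl n)) hw]
  have hne : ((n,n,n) : ℕ×ℕ×ℕ) ≠ (a,b,b) := by
    simp only [ne_eq, Prod.mk.injEq, not_and]; intros; omega
  rw [if_neg hne]
  have hiff : (((n,k,k) : ℕ×ℕ×ℕ) = (a,b,b)) ↔ (n = a ∧ k = b) := by
    simp only [Prod.mk.injEq]; omega
  rw [if_congr hiff rfl rfl]
  ring

lemma sg_nf_offdiag (m i : ℕ) {a b c : ℕ} (hw : OK (a,b,c)) (hab : a < b) (h1c : 1 ≤ c) :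
    (sg (nf m i)).coeff (Nt (a,b,c)) = 0 := by
  have hne : nf m i ≠ (a,b,c) := by
    rw [nf]
    split <;> · simp only [ne_eq, Prod.mk.injEq, not_and]; intros; omega
  rw [sg_apply (nf_OK m i) hw, if_neg hne]

lemma beta_snd_offdiag {n k : ℕ} {a b c : ℕ} (hab : a < b) (h1c : 1 ≤ c)
    (hcb : c ≤ b) : (beta n k).2.coeff (Nt (a,b,c)) = 0 := by
  have hw : OK (a,b,c) := OK_mk (by omega) hcb
  rw [beta_snd, MonoidAlgebra.coeff_sub, Finsupp.sub_apply, MonoidAlgebra.coeff_sum, Finsupp.finset_sum_apply, MonoidAlgebra.coeff_sum, Finsupp.finset_sum_apply]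
  rw [Finset.sum_eq_zero (fun i _ => sg_nf_offdiag n i hw hab h1c),
    Finset.sum_eq_zero (fun i _ => sg_nf_offdiag (n+1) i hw hab h1c)]
  ring

noncomputable def fm (v : ℕ × ℕ × ℕ) : R × R :=
  if v.1 = v.2.1 then c1 v.1 (v.1 - v.2.2 + 1) else c2 v.1 v.2.1 v.2.2

lemma fm_def (a b c : ℕ) :
    fm (a,b,c) = if a = b then c1 a (a - c + 1) else c2 a b c := rfl

lemma fm_snd_apply {a b c : ℕ} (h1 : a ≤ b) (h2 : c ≤ b) (h3 : 1 ≤ c) {w : ℕ×ℕ×ℕ}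
    (hw : OK w) : (fm (a,b,c)).2.coeff (Nt w) = if ((a,b,c) : ℕ×ℕ×ℕ) = w then (1:ℤ) else 0 := by
  rw [fm_def]
  by_cases hab : a = b
  · rw [if_pos hab, c1_snd_apply (by omega) (by omega) hw]
    have ht : ((a, a, a-(a-c+1)+1) : ℕ×ℕ×ℕ) = (a,b,c) := by
      have he : a - (a-c+1)+1 = c := by omega
      rw [he, hab]
    rw [ht]
  · rw [if_neg hab, c2_snd_apply (by omega) (by omega) hw]

lemma fm_fst_X {a' b' c' : ℕ} (h1 : a' ≤ b') (h2 : c' ≤ b') (h3 : 1 ≤ c') {a b : ℕ}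
    (hab : a < b) : (fm (a',b',c')).1.coeff (Nt (a,b,b)) = 0 := by
  have hw : OK (a,b,b) := OK_mk (by omega) le_rfl
  rw [fm_def]
  by_cases he : a' = b'
  · rw [if_pos he, c1_fst_apply (by omega) (by omega) hw, if_neg]
    simp only [ne_eq, Prod.mk.injEq, not_and]; intros; omega
  · rw [if_neg he, c2_fst_apply (by omega) (by omega) hw, if_neg]
    simp only [ne_eq, Prod.mk.injEq, not_and]; intros; omega

end FIMwork
namespace FIMwork

lemma ofc {g h : FIM1} (e : g = h) :
    MonoidAlgebra.of ℤ FIM1 g = MonoidAlgebra.of ℤ FIM1 h := congrArg _ e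

lemma RW5 {n k : ℕ} (h : k+1 ≤ n) : Xg^n * Yg^(k+1) * Xg = Xg^n * Yg^k := by
  rw [Xg, Yg]
  simp only [← map_pow, ← map_mul]
  exact ofc (W5 h)

lemma RW4' {n k j : ℕ} (h : j+1 ≤ k) :
    Xg^n * Yg^k * Xg^(j+1) * Yg = Xg^n * Yg^k * Xg^j := by
  rw [Xg, Yg]
  simp only [← map_pow, ← map_mul]
  refine ofc ?_
  calc mx^n * my^k * mx^(j+1) * my = mx^n * (my^k * mx^(j+1) * my) := by
        simp only [mul_assoc]
    _ = mx^n * (my^k * mx^j) := by rw [W4 h]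
    _ = mx^n * my^k * mx^j := by simp only [mul_assoc]

lemma RW3 (n k : ℕ) :
    Xg^n * Yg^k * Xg^(k+1) = Xg^(n+1) * Yg^(k+1) * Xg^(k+1) := by
  rw [Xg, Yg]
  simp only [← map_pow, ← map_mul]
  refine ofc ?_
  calc mx^n * my^k * mx^(k+1) = mx^n * (my^k * mx^(k+1)) := by simp only [mul_assoc]
    _ = mx^n * (mx * my^(k+1) * mx^(k+1)) := by rw [W3]
    _ = mx^(n+1) * my^(k+1) * mx^(k+1) := by
        rw [pow_succ mx n]; simp only [mul_assoc]

lemma d1_apply (p : R × R) : d1 p = p.1 * (Xg - 1) + p.2 * (Yg - 1) := rfl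

lemma d1_c1 {n k : ℕ} (h1 : 1 ≤ k) (h2 : k ≤ n) : d1 (c1 n k) = 0 := by
  obtain ⟨k', rfl⟩ : ∃ k', k = k' + 1 := ⟨k - 1, by omega⟩
  have e1 : (c1 n (k'+1)).1 = Xg^n * Yg^(k'+1) := by
    show (0:R) + _ = _; rw [zero_add]; rfl
  have e2 : (c1 n (k'+1)).2 = Xg^n * Yg^k' := by
    show Xg^n * Yg^(k'+1-1) + (0:R) = _
    rw [add_zero, Nat.add_sub_cancel]
  rw [d1_apply, e1, e2, mul_sub, mul_sub, mul_one, mul_one, RW5 (by omega)]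
  have e3 : Xg^n * Yg^k' * Yg = Xg^n * Yg^(k'+1) := by rw [mul_assoc, ← pow_succ]
  rw [e3]
  abel

lemma d1_c2 {n k j : ℕ} (h1 : 1 ≤ j) (h2 : j ≤ k) : d1 (c2 n k j) = 0 := by
  obtain ⟨j', rfl⟩ : ∃ j', j = j' + 1 := ⟨j - 1, by omega⟩
  have e1 : (c2 n k (j'+1)).1 = Xg^n * Yg^k * Xg^j' := by
    show Xg^n * Yg^k * Xg^(j'+1-1) + (0:R) = _
    rw [add_zero, Nat.add_sub_cancel]
  have e2 : (c2 n k (j'+1)).2 = Xg^n * Yg^k * Xg^(j'+1) := by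
    show (0:R) + _ = _; rw [zero_add]; rfl
  rw [d1_apply, e1, e2, mul_sub, mul_sub, mul_one, mul_one, RW4' (by omega)]
  have e3 : Xg^n * Yg^k * Xg^j' * Xg = Xg^n * Yg^k * Xg^(j'+1) := by
    rw [mul_assoc, ← pow_succ]
  rw [e3]
  abel

lemma beta_fst_raw (n k : ℕ) : (beta n k).1 =
    (∑ j ∈ Finset.range k, Xg^n * Yg^k * Xg^j) + Xg^n * Yg^k * Xg^k - Xg^n
      - ∑ j ∈ Finset.range (k+1), Xg^(n+1) * Yg^(k+1) * Xg^j := by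
  rw [beta]
  simp only [ex, ey, Prod.fst_sub, Prod.fst_add, Prod.fst_sum, Finset.sum_const_zero,
    zero_add, add_zero, sub_zero]

lemma beta_snd_raw (n k : ℕ) : (beta n k).2 =
    (∑ i ∈ Finset.range k, Xg^n * Yg^i) - ∑ i ∈ Finset.range (k+1), Xg^(n+1) * Yg^i := by
  rw [beta]
  simp only [ex, ey, Prod.snd_sub, Prod.snd_add, Prod.snd_sum, Finset.sum_const_zero,
    zero_add, add_zero, sub_zero]

lemma tel_x (m q : ℕ) :
    (∑ j ∈ Finset.range q, Xg^m * Yg^q * Xg^j) * (Xg - 1)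
      = Xg^m * Yg^q * Xg^q - Xg^m * Yg^q := by
  rw [Finset.sum_mul]
  have e : ∀ j ∈ Finset.range q, (Xg^m * Yg^q * Xg^j) * (Xg - 1)
      = Xg^m * Yg^q * Xg^(j+1) - Xg^m * Yg^q * Xg^j := by
    intro j _
    rw [mul_sub, mul_one, mul_assoc (Xg^m * Yg^q), ← pow_succ]
  rw [Finset.sum_congr rfl e, Finset.sum_range_sub (fun j => Xg^m * Yg^q * Xg^j)]
  rw [pow_zero, mul_one]

lemma tel_y (m q : ℕ) :
    (∑ i ∈ Finset.range q, Xg^m * Yg^i) * (Yg - 1) = Xg^m * Yg^q - Xg^m := by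
  rw [Finset.sum_mul]
  have e : ∀ i ∈ Finset.range q, (Xg^m * Yg^i) * (Yg - 1)
      = Xg^m * Yg^(i+1) - Xg^m * Yg^i := by
    intro i _
    rw [mul_sub, mul_one, mul_assoc, ← pow_succ]
  rw [Finset.sum_congr rfl e, Finset.sum_range_sub (fun i => Xg^m * Yg^i)]
  rw [pow_zero, mul_one]

lemma d1_beta (n k : ℕ) : d1 (beta n k) = 0 := by
  rw [d1_apply, beta_fst_raw, beta_snd_raw, sub_mul, sub_mul, add_mul, sub_mul,
    tel_x n k, tel_x (n+1) (k+1), tel_y n k, tel_y (n+1) (k+1)]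
  have e1 : Xg^n * Yg^k * Xg^k * (Xg - 1)
      = Xg^n * Yg^k * Xg^(k+1) - Xg^n * Yg^k * Xg^k := by
    rw [mul_sub, mul_one, mul_assoc (Xg^n * Yg^k), ← pow_succ]
  have e2 : Xg^n * (Xg - 1) = Xg^(n+1) - Xg^n := by
    rw [mul_sub, mul_one, ← pow_succ]
  rw [e1, e2, RW3]
  abel

end FIMwork
namespace FIMwork

def stepx (v : ℕ×ℕ×ℕ) : ℕ×ℕ×ℕ :=
  if v.2.2 < v.2.1 then (v.1, v.2.1, v.2.2+1) else (v.1+1, v.2.1+1, v.2.1+1)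

def stepy (v : ℕ×ℕ×ℕ) : ℕ×ℕ×ℕ :=
  if v.2.2 = 0 then (v.1, v.2.1+1, 0) else (v.1, v.2.1, v.2.2-1)

lemma stepx_def (a b c : ℕ) :
    stepx (a,b,c) = if c < b then (a,b,c+1) else (a+1,b+1,b+1) := rfl

lemma stepy_def (a b c : ℕ) :
    stepy (a,b,c) = if c = 0 then (a,b+1,0) else (a,b,c-1) := rfl

lemma stepx_OK {v : ℕ×ℕ×ℕ} (hv : OK v) : OK (stepx v) := by
  obtain ⟨a,b,c⟩ := v
  obtain ⟨h1,h2⟩ : a ≤ b ∧ c ≤ b := hv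
  rw [stepx_def]
  split <;> exact OK_mk (by omega) (by omega)

lemma stepy_OK {v : ℕ×ℕ×ℕ} (hv : OK v) : OK (stepy v) := by
  obtain ⟨a,b,c⟩ := v
  obtain ⟨h1,h2⟩ : a ≤ b ∧ c ≤ b := hv
  rw [stepy_def]
  split <;> exact OK_mk (by omega) (by omega)

lemma Nt_mul_mx {v : ℕ×ℕ×ℕ} (hv : OK v) : Nt v * mx = Nt (stepx v) := by
  obtain ⟨a,b,c⟩ := v
  obtain ⟨h1,h2⟩ : a ≤ b ∧ c ≤ b := hv
  rw [stepx_def]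
  split
  · next h => exact Nt_mul_x_lt h
  · next h =>
    have hcb : c = b := by omega
    rw [hcb]
    exact Nt_mul_x_eq a b

lemma Nt_mul_my {v : ℕ×ℕ×ℕ} (hv : OK v) : Nt v * my = Nt (stepy v) := by
  obtain ⟨a,b,c⟩ := v
  obtain ⟨h1,h2⟩ : a ≤ b ∧ c ≤ b := hv
  rw [stepy_def]
  split
  · next h =>
    subst h
    exact Nt_mul_y_zero a b
  · next h => exact Nt_mul_y_pos (by omega) h2

noncomputable def path (v : ℕ×ℕ×ℕ) : R × R :=
  (∑ i ∈ Finset.range v.1, ex (sg (i,i,i)))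
  - (∑ j ∈ Finset.range v.1, ex (sg (v.1, v.1, j)))
  + (∑ i ∈ Finset.Ico v.1 v.2.1, ey (sg (v.1, i, 0)))
  + (∑ j ∈ Finset.range v.2.2, ex (sg (v.1, v.2.1, j)))

lemma path_def (a b c : ℕ) : path (a,b,c) =
    (∑ i ∈ Finset.range a, ex (sg (i,i,i)))
    - (∑ j ∈ Finset.range a, ex (sg (a, a, j)))
    + (∑ i ∈ Finset.Ico a b, ey (sg (a, i, 0)))
    + (∑ j ∈ Finset.range c, ex (sg (a, b, j))) := rfl

lemma path_diag (a : ℕ) :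
    path (a,a,a) = ∑ i ∈ Finset.range a, ex (sg (i,i,i)) := by
  rw [path_def, Finset.Ico_self, Finset.sum_empty]
  abel

lemma path_sx {a b c : ℕ} (hab : a ≤ b) (hcb : c ≤ b)
    (hpat : c < b ∨ (a = b ∧ c = b)) :
    path (stepx (a,b,c)) - path (a,b,c) = ex (sg (a,b,c)) := by
  rcases hpat with h | ⟨h1, h2⟩
  · rw [stepx_def, if_pos h, path_def, path_def, Finset.sum_range_succ]
    abel
  · rw [h1, h2, stepx_def, if_neg (lt_irrefl b), path_diag, path_diag,
      Finset.sum_range_succ]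
    abel

lemma path_sy {a b : ℕ} (hab : a ≤ b) :
    path (stepy (a,b,0)) - path (a,b,0) = ey (sg (a,b,0)) := by
  rw [stepy_def, if_pos rfl, path_def, path_def, Finset.sum_Ico_succ_top hab]
  abel

noncomputable def sigma : R →ₗ[ℤ] R × R :=
  Finsupp.lsum ℤ (fun g => LinearMap.toSpanSingleton ℤ (R × R) (path (dec g))) ∘ₗ
    (MonoidAlgebra.coeffLinearEquiv ℤ).toLinearMap

lemma sigma_single (g : FIM1) (z : ℤ) :
    sigma (MonoidAlgebra.single g z) = z • path (dec g) := by
  rw [sigma, LinearMap.comp_apply]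
  erw [Finsupp.lsum_single]
  rw [LinearMap.toSpanSingleton_apply]

lemma sigma_edge_x {u : FIM1} (z : ℤ) {w : ℕ×ℕ×ℕ} (hOK : OK w) (hu : u = Nt w)
    (hpat : w.2.2 < w.2.1 ∨ (w.1 = w.2.1 ∧ w.2.2 = w.2.1)) :
    sigma (MonoidAlgebra.single u z * (Xg - 1)) = ((MonoidAlgebra.single u z : R), (0:R)) := by
  have e1 : MonoidAlgebra.single u z * (Xg - 1)
      = MonoidAlgebra.single (u * mx) z - MonoidAlgebra.single u z := by
    rw [mul_sub, mul_one, Xg, MonoidAlgebra.of_apply, MonoidAlgebra.single_mul_single, mul_one]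
  obtain ⟨a,b,c⟩ := w
  obtain ⟨h1,h2⟩ : a ≤ b ∧ c ≤ b := ⟨hOK.1, hOK.2⟩
  have hpat' : c < b ∨ (a = b ∧ c = b) := hpat
  subst hu
  rw [e1, map_sub, Nt_mul_mx hOK, sigma_single, sigma_single, dec_Nt hOK,
    dec_Nt (stepx_OK hOK), ← smul_sub, path_sx h1 h2 hpat']
  show z • ((sg (a,b,c) : R), (0:R)) = _
  rw [Prod.smul_mk, smul_zero, sg]
  rw [MonoidAlgebra.smul_single', mul_one]

lemma sigma_edge_y {u : FIM1} (z : ℤ) {w : ℕ×ℕ×ℕ} (hOK : OK w) (hu : u = Nt w)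
    (hpat : w.2.2 = 0) :
    sigma (MonoidAlgebra.single u z * (Yg - 1)) = ((0:R), (MonoidAlgebra.single u z : R)) := by
  have e1 : MonoidAlgebra.single u z * (Yg - 1)
      = MonoidAlgebra.single (u * my) z - MonoidAlgebra.single u z := by
    rw [mul_sub, mul_one, Yg, MonoidAlgebra.of_apply, MonoidAlgebra.single_mul_single, mul_one]
  obtain ⟨a,b,c⟩ := w
  obtain ⟨h1,h2⟩ : a ≤ b ∧ c ≤ b := ⟨hOK.1, hOK.2⟩
  have hc : c = 0 := hpat
  subst hc
  subst hu
  rw [e1, map_sub, Nt_mul_my hOK, sigma_single, sigma_single, dec_Nt hOK,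
    dec_Nt (stepy_OK hOK), ← smul_sub, path_sy h1]
  show z • ((0:R), (sg (a,b,0) : R)) = _
  rw [Prod.smul_mk, smul_zero, sg]
  rw [MonoidAlgebra.smul_single', mul_one]

lemma base {p : R × R} (hker : d1 p = 0)
    (hX : ∀ a b : ℕ, a < b → p.1.coeff (Nt (a,b,b)) = 0)
    (hY : ∀ a b c : ℕ, a ≤ b → c ≤ b → 1 ≤ c → p.2.coeff (Nt (a,b,c)) = 0) :
    p = 0 := by
  have part1 : sigma (p.1 * (Xg - 1)) = (p.1, (0:R)) := by
    have hr : p.1 * (Xg - 1)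
        = ∑ u ∈ p.1.coeff.support, MonoidAlgebra.single u (p.1.coeff u) * (Xg - 1) := by
      conv_lhs => rw [← MonoidAlgebra.sum_coeff_single p.1]
      rw [Finsupp.sum, Finset.sum_mul]
    have he : ∀ u ∈ p.1.coeff.support, sigma (MonoidAlgebra.single u (p.1.coeff u) * (Xg - 1))
        = ((MonoidAlgebra.single u (p.1.coeff u) : R), (0:R)) := by
      intro u hu
      obtain ⟨hOK, hNt⟩ := dec_spec u
      refine sigma_edge_x _ hOK hNt.symm ?_
      have h1 : (dec u).1 ≤ (dec u).2.1 := hOK.1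
      have h2 : (dec u).2.2 ≤ (dec u).2.1 := hOK.2
      rcases Nat.lt_or_ge (dec u).2.2 (dec u).2.1 with h | h
      · exact Or.inl h
      · have hcb : (dec u).2.2 = (dec u).2.1 := by omega
        rcases Nat.lt_or_ge (dec u).1 (dec u).2.1 with h' | h'
        · exfalso
          apply Finsupp.mem_support_iff.mp hu
          have hxx := hX (dec u).1 (dec u).2.1 h'
          have heq : dec u = ((dec u).1, (dec u).2.1, (dec u).2.1) :=
            Prod.ext_iff.mpr ⟨rfl, Prod.ext_iff.mpr ⟨rfl, hcb⟩⟩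
          rw [← hNt, heq]
          exact hxx
        · exact Or.inr ⟨by omega, hcb⟩
    rw [hr, map_sum, Finset.sum_congr rfl he, Prod.ext_iff]
    constructor
    · rw [Prod.fst_sum]
      conv_rhs => rw [← MonoidAlgebra.sum_coeff_single p.1, Finsupp.sum]
    · rw [Prod.snd_sum]
      simp
  have part2 : sigma (p.2 * (Yg - 1)) = ((0:R), p.2) := by
    have hr : p.2 * (Yg - 1)
        = ∑ u ∈ p.2.coeff.support, MonoidAlgebra.single u (p.2.coeff u) * (Yg - 1) := by
      conv_lhs => rw [← MonoidAlgebra.sum_coeff_single p.2]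
      rw [Finsupp.sum, Finset.sum_mul]
    have he : ∀ u ∈ p.2.coeff.support, sigma (MonoidAlgebra.single u (p.2.coeff u) * (Yg - 1))
        = ((0:R), (MonoidAlgebra.single u (p.2.coeff u) : R)) := by
      intro u hu
      obtain ⟨hOK, hNt⟩ := dec_spec u
      refine sigma_edge_y _ hOK hNt.symm ?_
      have h1 : (dec u).1 ≤ (dec u).2.1 := hOK.1
      have h2 : (dec u).2.2 ≤ (dec u).2.1 := hOK.2
      by_contra hc0
      apply Finsupp.mem_support_iff.mp hu
      have hyy := hY (dec u).1 (dec u).2.1 (dec u).2.2 h1 h2 (by omega)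
      rw [← hNt]
      exact hyy
    rw [hr, map_sum, Finset.sum_congr rfl he, Prod.ext_iff]
    constructor
    · rw [Prod.fst_sum]
      simp
    · rw [Prod.snd_sum]
      conv_rhs => rw [← MonoidAlgebra.sum_coeff_single p.2, Finsupp.sum]
  have key : sigma (d1 p) = p := by
    rw [d1_apply, map_add, part1, part2, Prod.ext_iff]
    constructor <;> simp
  rw [hker, map_zero] at key
  exact key.symm

end FIMwork
namespace FIMwork

attribute [local instance] Classical.propDecidable

lemma comb_fst (l : Idx →₀ ℤ) (g : FIM1) :
    ((Finsupp.linearCombination ℤ fam l) : R × R).1.coeff g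
      = ∑ i ∈ l.support, l i * (fam i).1.coeff g := by
  rw [Finsupp.linearCombination_apply, Finsupp.sum, Prod.fst_sum, MonoidAlgebra.coeff_sum, Finsupp.finset_sum_apply]
  refine Finset.sum_congr rfl fun i _ => ?_
  rw [Prod.smul_fst, MonoidAlgebra.coeff_smul, Finsupp.smul_apply, smul_eq_mul]

lemma comb_snd (l : Idx →₀ ℤ) (g : FIM1) :
    ((Finsupp.linearCombination ℤ fam l) : R × R).2.coeff g
      = ∑ i ∈ l.support, l i * (fam i).2.coeff g := by
  rw [Finsupp.linearCombination_apply, Finsupp.sum, Prod.snd_sum, MonoidAlgebra.coeff_sum, Finsupp.finset_sum_apply]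
  refine Finset.sum_congr rfl fun i _ => ?_
  rw [Prod.smul_snd, MonoidAlgebra.coeff_smul, Finsupp.smul_apply, smul_eq_mul]

lemma fam_c1 {n k : ℕ} (h : 0 < k ∧ k ≤ n) :
    fam (Sum.inl ⟨(n,k), h⟩) = c1 n k := rfl

lemma fam_c2 {n k j : ℕ} (h : n < k ∧ 0 < j ∧ j ≤ k) :
    fam (Sum.inr (Sum.inl ⟨(n,k,j), h⟩)) = c2 n k j := rfl

lemma fam_beta {n k : ℕ} (h : n < k) :
    fam (Sum.inr (Sum.inr ⟨(n,k), h⟩)) = beta n k := rfl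

theorem indep : LinearIndependent ℤ fam := by
  rw [linearIndependent_iff]
  intro l hl
  have Hfst : ∀ w : ℕ×ℕ×ℕ, ∑ i ∈ l.support, l i * (fam i).1.coeff (Nt w) = 0 := by
    intro w
    rw [← comb_fst l (Nt w), hl]
    rfl
  have Hsnd : ∀ w : ℕ×ℕ×ℕ, ∑ i ∈ l.support, l i * (fam i).2.coeff (Nt w) = 0 := by
    intro w
    rw [← comb_snd l (Nt w), hl]
    rfl
  -- Stage 1: all β coefficients vanish
  have hbeta : ∀ (n k : ℕ) (h : n < k), l (Sum.inr (Sum.inr ⟨(n,k), h⟩)) = 0 := by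
    intro n k h
    set i0 : Idx := Sum.inr (Sum.inr ⟨(n,k), h⟩) with hi0
    have hw : OK (n,k,k) := OK_mk (by omega) le_rfl
    have key : ∀ i ∈ l.support, l i * (fam i).1.coeff (Nt (n,k,k))
        = if i = i0 then l i else 0 := by
      intro i _
      match i with
      | .inl ⟨(n',k'), hc⟩ =>
        obtain ⟨hc1, hc2⟩ : 0 < k' ∧ k' ≤ n' := hc
        rw [fam_c1, c1_fst_apply hc1 hc2 hw, if_neg,
          if_neg (by rw [hi0]; exact Sum.inl_ne_inr)]
        · ring
        · simp only [ne_eq, Prod.mk.injEq, not_and]; intros; omega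
      | .inr (.inl ⟨(n',k',j'), hc⟩) =>
        obtain ⟨hc1, hc2, hc3⟩ : n' < k' ∧ 0 < j' ∧ j' ≤ k' := hc
        rw [fam_c2, c2_fst_apply (by omega) (by omega) hw, if_neg,
          if_neg (by rw [hi0]; exact fun hcon => Sum.inl_ne_inr (Sum.inr_injective hcon))]
        · ring
        · simp only [ne_eq, Prod.mk.injEq, not_and]; intros; omega
      | .inr (.inr ⟨(n',k'), hc⟩) =>
        rw [fam_beta, beta_fst_X hc (by omega : n < k)]
        by_cases hnn : n' = n ∧ k' = k
        · obtain ⟨rfl, rfl⟩ := hnn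
          rw [if_pos ⟨rfl, rfl⟩, mul_one]; exact (if_pos rfl).symm
        · rw [if_neg (by tauto), if_neg, mul_zero]
          rw [hi0]
          intro hcon
          injection hcon with h1'
          injection h1' with h2'
          have h3' := congrArg Subtype.val h2'
          exact hnn ⟨congrArg Prod.fst h3', congrArg (fun v => v.2) h3'⟩
    have := Hfst (n,k,k)
    rw [Finset.sum_congr rfl key, Finset.sum_ite_eq' l.support i0 (fun i => l i)] at this
    by_cases hmem : i0 ∈ l.support
    · rw [if_pos hmem] at this; exact this
    · exact Finsupp.notMem_support_iff.mp hmem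
  -- Stage 2a: c2 coefficients vanish
  have hc2z : ∀ (n k j : ℕ) (h : n < k ∧ 0 < j ∧ j ≤ k),
      l (Sum.inr (Sum.inl ⟨(n,k,j), h⟩)) = 0 := by
    intro n k j h
    obtain ⟨h1, h2, h3⟩ := h
    set i0 : Idx := Sum.inr (Sum.inl ⟨(n,k,j), ⟨h1, h2, h3⟩⟩) with hi0
    have hw : OK (n,k,j) := OK_mk (by omega) (by omega)
    have key : ∀ i ∈ l.support, l i * (fam i).2.coeff (Nt (n,k,j))
        = if i = i0 then l i else 0 := by
      intro i _
      match i with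
      | .inl ⟨(n',k'), hc⟩ =>
        obtain ⟨hc1, hc2⟩ : 0 < k' ∧ k' ≤ n' := hc
        rw [fam_c1, c1_snd_apply hc1 hc2 hw, if_neg,
          if_neg (by rw [hi0]; exact Sum.inl_ne_inr)]
        · ring
        · simp only [ne_eq, Prod.mk.injEq, not_and]; intros; omega
      | .inr (.inl ⟨(n',k',j'), hc⟩) =>
        obtain ⟨hc1, hc2, hc3⟩ : n' < k' ∧ 0 < j' ∧ j' ≤ k' := hc
        rw [fam_c2, c2_snd_apply (by omega) (by omega) hw]
        by_cases hnn : n' = n ∧ k' = k ∧ j' = j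
        · obtain ⟨rfl, rfl, rfl⟩ := hnn
          rw [if_pos rfl, mul_one]; exact (if_pos rfl).symm
        · rw [if_neg, if_neg, mul_zero]
          · rw [hi0]
            intro hcon
            injection hcon with h1'
            injection h1' with h2'
            have h3' := congrArg Subtype.val h2'
            exact hnn ⟨congrArg Prod.fst h3', congrArg (fun v => v.2.1) h3',
              congrArg (fun v => v.2.2) h3'⟩
          · simp only [ne_eq, Prod.mk.injEq]
            tauto
      | .inr (.inr ⟨(n',k'), hc⟩) =>
        rw [fam_beta, beta_snd_offdiag h1 h2 (by omega), mul_zero,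
          if_neg (by rw [hi0]; exact fun hcon => Sum.inr_ne_inl (Sum.inr_injective hcon))]
    have := Hsnd (n,k,j)
    rw [Finset.sum_congr rfl key, Finset.sum_ite_eq' l.support i0 (fun i => l i)] at this
    by_cases hmem : i0 ∈ l.support
    · rw [if_pos hmem] at this; exact this
    · exact Finsupp.notMem_support_iff.mp hmem
  -- Stage 2b: c1 coefficients vanish
  have hc1z : ∀ (n k : ℕ) (h : 0 < k ∧ k ≤ n), l (Sum.inl ⟨(n,k), h⟩) = 0 := by
    intro n k h
    obtain ⟨h1, h2⟩ := h
    set i0 : Idx := Sum.inl ⟨(n,k), ⟨h1, h2⟩⟩ with hi0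
    have hw : OK (n,n,n-k+1) := OK_mk le_rfl (by omega)
    have key : ∀ i ∈ l.support, l i * (fam i).2.coeff (Nt (n,n,n-k+1))
        = if i = i0 then l i else 0 := by
      intro i _
      match i with
      | .inl ⟨(n',k'), hc⟩ =>
        obtain ⟨hc1, hc2⟩ : 0 < k' ∧ k' ≤ n' := hc
        rw [fam_c1, c1_snd_apply hc1 hc2 hw]
        by_cases hnn : n' = n ∧ k' = k
        · obtain ⟨rfl, rfl⟩ := hnn
          rw [if_pos rfl, mul_one]; exact (if_pos rfl).symm
        · rw [if_neg, if_neg, mul_zero]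
          · rw [hi0]
            intro hcon
            injection hcon with h1'
            have h3' := congrArg Subtype.val h1'
            exact hnn ⟨congrArg Prod.fst h3', congrArg (fun v => v.2) h3'⟩
          · simp only [ne_eq, Prod.mk.injEq, not_and]
            intros; omega
      | .inr (.inl ⟨(n',k',j'), hc⟩) =>
        obtain ⟨hc1, hc2, hc3⟩ : n' < k' ∧ 0 < j' ∧ j' ≤ k' := hc
        rw [fam_c2, c2_snd_apply (by omega) (by omega) hw, if_neg,
          if_neg (by rw [hi0]; exact Sum.inr_ne_inl)]
        · ring
        · simp only [ne_eq, Prod.mk.injEq, not_and]; intros; omega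
      | .inr (.inr ⟨(n',k'), hc⟩) =>
        rw [if_neg (by rw [hi0]; exact Sum.inr_ne_inl), hbeta n' k' hc, zero_mul]
    have := Hsnd (n,n,n-k+1)
    rw [Finset.sum_congr rfl key, Finset.sum_ite_eq' l.support i0 (fun i => l i)] at this
    by_cases hmem : i0 ∈ l.support
    · rw [if_pos hmem] at this; exact this
    · exact Finsupp.notMem_support_iff.mp hmem
  ext i
  match i with
  | .inl ⟨(n,k), hc⟩ => exact hc1z n k hc
  | .inr (.inl ⟨(n,k,j), hc⟩) => exact hc2z n k j hc
  | .inr (.inr ⟨(n,k), hc⟩) => exact hbeta n k hc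

end FIMwork
namespace FIMwork

attribute [local instance] Classical.propDecidable

lemma fm_fst_X' {v : ℕ×ℕ×ℕ} (h : OK v) (h3 : 1 ≤ v.2.2) {a b : ℕ} (hab : a < b) :
    (fm v).1.coeff (Nt (a,b,b)) = 0 := by
  obtain ⟨a',b',c'⟩ := v
  exact fm_fst_X h.1 h.2 h3 hab

lemma fm_snd_apply' {v : ℕ×ℕ×ℕ} (h : OK v) (h3 : 1 ≤ v.2.2) {w : ℕ×ℕ×ℕ} (hw : OK w) :
    (fm v).2.coeff (Nt w) = if v = w then (1:ℤ) else 0 := by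
  obtain ⟨a',b',c'⟩ := v
  exact fm_snd_apply h.1 h.2 h3 hw

lemma d1_fm {v : ℕ×ℕ×ℕ} (h : OK v) (h3 : 1 ≤ v.2.2) : d1 (fm v) = 0 := by
  obtain ⟨a,b,c⟩ := v
  obtain ⟨h1, h2⟩ : a ≤ b ∧ c ≤ b := ⟨h.1, h.2⟩
  have h3' : 1 ≤ c := h3
  rw [fm_def]
  split
  · next hd => exact d1_c1 (by omega) (by omega)
  · exact d1_c2 (by omega) (by omega)

lemma d1_fam (i : Idx) : d1 (fam i) = 0 := by
  match i with
  | .inl ⟨(n,k), hc⟩ =>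
    obtain ⟨h1, h2⟩ : 0 < k ∧ k ≤ n := hc
    exact d1_c1 h1 h2
  | .inr (.inl ⟨(n,k,j), hc⟩) =>
    obtain ⟨h1, h2, h3⟩ : n < k ∧ 0 < j ∧ j ≤ k := hc
    exact d1_c2 h2 h3
  | .inr (.inr ⟨(n,k), hc⟩) => exact d1_beta n k

lemma sum_fst_apply {α : Type*} (s : Finset α) (z : α → ℤ) (f : α → R × R) (g : FIM1) :
    (∑ i ∈ s, z i • f i).1.coeff g = ∑ i ∈ s, z i * (f i).1.coeff g := by
  rw [Prod.fst_sum, MonoidAlgebra.coeff_sum, Finsupp.finset_sum_apply]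
  exact Finset.sum_congr rfl fun i _ => by rw [Prod.smul_fst, MonoidAlgebra.coeff_smul, Finsupp.smul_apply, smul_eq_mul]

lemma sum_snd_apply {α : Type*} (s : Finset α) (z : α → ℤ) (f : α → R × R) (g : FIM1) :
    (∑ i ∈ s, z i • f i).2.coeff g = ∑ i ∈ s, z i * (f i).2.coeff g := by
  rw [Prod.snd_sum, MonoidAlgebra.coeff_sum, Finsupp.finset_sum_apply]
  exact Finset.sum_congr rfl fun i _ => by rw [Prod.smul_snd, MonoidAlgebra.coeff_smul, Finsupp.smul_apply, smul_eq_mul]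

noncomputable def Xfin (p : R × R) : Finset (ℕ × ℕ) :=
  ((p.1.coeff.support.image (fun g => ((dec g).1, (dec g).2.1))).filter
    (fun ab => ab.1 < ab.2 ∧ p.1.coeff (Nt (ab.1, ab.2, ab.2)) ≠ 0))

lemma mem_Xfin {p : R × R} {a b : ℕ} :
    (a,b) ∈ Xfin p ↔ a < b ∧ p.1.coeff (Nt (a,b,b)) ≠ 0 := by
  constructor
  · intro h
    exact (Finset.mem_filter.mp h).2
  · intro h
    refine Finset.mem_filter.mpr ⟨?_, h⟩
    refine Finset.mem_image.mpr ⟨Nt (a,b,b), ?_, ?_⟩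
    · exact Finsupp.mem_support_iff.mpr h.2
    · rw [dec_Nt (OK_mk (by omega) le_rfl)]

noncomputable def Yfin (p : R × R) : Finset (ℕ × ℕ × ℕ) :=
  ((p.2.coeff.support.image dec).filter
    (fun v => (OK v ∧ 1 ≤ v.2.2) ∧ p.2.coeff (Nt v) ≠ 0))

lemma mem_Yfin {p : R × R} {v : ℕ×ℕ×ℕ} :
    v ∈ Yfin p ↔ (OK v ∧ 1 ≤ v.2.2) ∧ p.2.coeff (Nt v) ≠ 0 := by
  constructor
  · intro h
    exact (Finset.mem_filter.mp h).2
  · intro h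
    refine Finset.mem_filter.mpr ⟨?_, h⟩
    refine Finset.mem_image.mpr ⟨Nt v, ?_, ?_⟩
    · exact Finsupp.mem_support_iff.mpr h.2
    · rw [dec_Nt h.1.1]

theorem ker_le_span {p : R × R} (hp : d1 p = 0) :
    p ∈ Submodule.span ℤ (Set.range fam) := by
  set S1 : R × R := ∑ ab ∈ Xfin p, (p.1.coeff (Nt (ab.1, ab.2, ab.2))) • beta ab.1 ab.2 with hS1
  set q : R × R := p - S1 with hqdef
  set S2 : R × R := ∑ v ∈ Yfin q, (q.2.coeff (Nt v)) • fm v with hS2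
  set r : R × R := q - S2 with hrdef
  have hS1span : S1 ∈ Submodule.span ℤ (Set.range fam) := by
    rw [hS1]
    refine Submodule.sum_mem _ fun ab hab => ?_
    have hm : ab.1 < ab.2 := by
      obtain ⟨a, b⟩ := ab
      exact (mem_Xfin.mp hab).1
    refine Submodule.smul_mem _ _ (Submodule.subset_span ?_)
    exact ⟨Sum.inr (Sum.inr ⟨(ab.1, ab.2), hm⟩), rfl⟩
  have hS2span : S2 ∈ Submodule.span ℤ (Set.range fam) := by
    rw [hS2]
    refine Submodule.sum_mem _ fun v hv => ?_
    obtain ⟨⟨hOK, h3⟩, hnz⟩ := mem_Yfin.mp hv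
    refine Submodule.smul_mem _ _ (Submodule.subset_span ?_)
    obtain ⟨a, b, c⟩ := v
    obtain ⟨h1, h2⟩ : a ≤ b ∧ c ≤ b := ⟨hOK.1, hOK.2⟩
    have h3' : 1 ≤ c := h3
    by_cases hd : a = b
    · refine ⟨Sum.inl ⟨(a, a - c + 1), ⟨by show 0 < a - c + 1; omega,
        by show a - c + 1 ≤ a; omega⟩⟩, ?_⟩
      rw [fam_c1, fm_def, if_pos hd]
    · refine ⟨Sum.inr (Sum.inl ⟨(a, b, c), ⟨by show a < b; omega, by show 0 < c; omega,
        by show c ≤ b; omega⟩⟩), ?_⟩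
      rw [fam_c2, fm_def, if_neg hd]
  have hqX : ∀ a b : ℕ, a < b → q.1.coeff (Nt (a,b,b)) = 0 := by
    intro a b hab
    rw [hqdef, Prod.fst_sub, MonoidAlgebra.coeff_sub, Finsupp.sub_apply, hS1,
      sum_fst_apply (Xfin p) (fun ab => p.1.coeff (Nt (ab.1, ab.2, ab.2)))
        (fun ab => beta ab.1 ab.2) (Nt (a,b,b))]
    have he : ∀ ab ∈ Xfin p, p.1.coeff (Nt (ab.1, ab.2, ab.2)) * (beta ab.1 ab.2).1.coeff (Nt (a,b,b))
        = if ab = (a,b) then p.1.coeff (Nt (a,b,b)) else 0 := by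
      intro ab hm
      obtain ⟨a', b'⟩ := ab
      have h1 : a' < b' := (mem_Xfin.mp hm).1
      rw [beta_fst_X h1 hab]
      by_cases hnn : a' = a ∧ b' = b
      · obtain ⟨rfl, rfl⟩ := hnn
        rw [if_pos ⟨rfl, rfl⟩, if_pos rfl, mul_one]
      · rw [if_neg hnn, if_neg, mul_zero]
        intro hcon
        exact hnn ⟨congrArg Prod.fst hcon, congrArg Prod.snd hcon⟩
    rw [Finset.sum_congr rfl he, Finset.sum_ite_eq' (Xfin p) ((a,b) : ℕ × ℕ)
      (fun _ => p.1.coeff (Nt (a,b,b)))]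
    by_cases hmem : ((a,b) : ℕ × ℕ) ∈ Xfin p
    · rw [if_pos hmem, sub_self]
    · rw [if_neg hmem, sub_zero]
      by_contra hne
      exact hmem (mem_Xfin.mpr ⟨hab, hne⟩)
  have hqker : d1 q = 0 := by
    rw [hqdef, map_sub, hp, hS1, map_sum, zero_sub, neg_eq_zero]
    refine Finset.sum_eq_zero fun ab _ => ?_
    rw [map_zsmul, d1_beta, smul_zero]
  have hrX : ∀ a b : ℕ, a < b → r.1.coeff (Nt (a,b,b)) = 0 := by
    intro a b hab
    rw [hrdef, Prod.fst_sub, MonoidAlgebra.coeff_sub, Finsupp.sub_apply, hS2,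
      sum_fst_apply (Yfin q) (fun v => q.2.coeff (Nt v)) fm (Nt (a,b,b)), hqX a b hab]
    rw [Finset.sum_eq_zero, sub_self]
    intro v hv
    obtain ⟨⟨hOK, h3⟩, _⟩ := mem_Yfin.mp hv
    rw [fm_fst_X' hOK h3 hab, mul_zero]
  have hrY : ∀ v : ℕ×ℕ×ℕ, OK v → 1 ≤ v.2.2 → r.2.coeff (Nt v) = 0 := by
    intro v hOK h3
    rw [hrdef, Prod.snd_sub, MonoidAlgebra.coeff_sub, Finsupp.sub_apply, hS2,
      sum_snd_apply (Yfin q) (fun v => q.2.coeff (Nt v)) fm (Nt v)]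
    have he : ∀ v' ∈ Yfin q, q.2.coeff (Nt v') * (fm v').2.coeff (Nt v)
        = if v' = v then q.2.coeff (Nt v) else 0 := by
      intro v' hv'
      obtain ⟨⟨hOK', h3'⟩, _⟩ := mem_Yfin.mp hv'
      rw [fm_snd_apply' hOK' h3' hOK]
      by_cases hnn : v' = v
      · rw [if_pos hnn, if_pos hnn, hnn, mul_one]
      · rw [if_neg hnn, if_neg hnn, mul_zero]
    rw [Finset.sum_congr rfl he, Finset.sum_ite_eq' (Yfin q) v (fun _ => q.2.coeff (Nt v))]
    by_cases hmem : v ∈ Yfin q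
    · rw [if_pos hmem, sub_self]
    · rw [if_neg hmem, sub_zero]
      by_contra hne
      exact hmem (mem_Yfin.mpr ⟨⟨hOK, h3⟩, hne⟩)
  have hrker : d1 r = 0 := by
    rw [hrdef, map_sub, hqker, hS2, map_sum, zero_sub, neg_eq_zero]
    refine Finset.sum_eq_zero fun v hv => ?_
    obtain ⟨⟨hOK, h3⟩, _⟩ := mem_Yfin.mp hv
    rw [map_zsmul, d1_fm hOK h3, smul_zero]
  have hr0 : r = 0 := by
    refine base hrker hrX ?_
    intro a b c h1 h2 h3
    exact hrY (a,b,c) (OK_mk h1 h2) h3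
  have hq : q = S2 := by
    rw [hr0] at hrdef
    exact sub_eq_zero.mp hrdef.symm
  have hpeq : p = S2 + S1 := by
    calc p = q + S1 := by rw [hqdef]; abel
    _ = S2 + S1 := by rw [hq]
  rw [hpeq]
  exact Submodule.add_mem _ hS2span hS1span

end FIMwork

/-- The family of `c₁`'s, `c₂`'s and `β`'s is a ℤ-basis of `ker d₁`. -/
theorem cycles_basis_of_ker_d1 :
    LinearIndependent ℤ fam ∧
    Submodule.span ℤ (Set.range fam) = (LinearMap.ker d1).restrictScalars ℤ := by
  constructor
  · exact FIMwork.indep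
  · apply le_antisymm
    · rw [Submodule.span_le]
      rintro x ⟨i, rfl⟩
      simp only [SetLike.mem_coe, Submodule.restrictScalars_mem, LinearMap.mem_ker]
      exact FIMwork.d1_fam i
    · intro p hp
      have hker : d1 p = 0 := by
        simpa only [Submodule.restrictScalars_mem, LinearMap.mem_ker] using hp
      exact FIMwork.ker_le_span hker
end
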